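/- arXiv:2501.11393 — 6 statements merged into one kernel-verified Lean document; each statement's English description precedes it below -/
import Mathlib

section
/- Let n ≥ 1, let x ∈ {0,1}^n, and let q ∈ (0,1). The expected number of runs of 0s in a trace of x obtained by passing x through an i.i.d. deletion channel with deletion probability q is E[R_{x,0}] = (1−q)·( n − w_H(x) − ((1−q)/q)·Σ_{i,j ∈ S̄_x, i<j} q^{j−i} ). -/
open Finset

/-- Number of deletions in a deletion pattern (number of `1`s in `ω`). -/
def wt {n : ℕ} (ω : Fin n → Bool) : ℕ := (univ.filter fun j => ω j = true).card

/-- Trace of `x` under deletion pattern `ω`: the subsequence of bits `x j`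
at the positions `j` with `ω j = 0`, in increasing order of position. -/
def trc {n : ℕ} (x ω : Fin n → Bool) : List Bool :=
  ((List.finRange n).filter fun j => ω j = false).map x

/-- Total number of runs (maximal blocks of equal bits) in a binary list. -/
def numRuns (l : List Bool) : ℕ := (l.destutter (· ≠ ·)).length

/-- Number of runs of `0`s in a binary list. -/
def numZeroRuns (l : List Bool) : ℕ := (l.destutter (· ≠ ·)).count false

/-- Number of runs of `1`s in a binary list. -/
def numOneRuns (l : List Bool) : ℕ := (l.destutter (· ≠ ·)).count true

/-!
Condition on the first bit. If it is deleted the trace is unchanged; if it survives it is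
prepended to the trace of the rest, and a surviving `0` opens a new run of `0`s exactly when
the rest of the trace does not start with `0`. The rest of the trace starts with `0` when its
first surviving position is some zero `j` of `x`, which has probability `(1 - q) q ^ j`. Hence
`E(0x) = E(x) + (1 - q)(1 - (1 - q) ∑_{x_j = 0} q ^ j)` and `E(1x) = E(x)`, which unrolls to the
formula.
-/

theorem numZeroRuns_true_cons (l : List Bool) : numZeroRuns (true :: l) = numZeroRuns l := by
  rcases l with _ | ⟨_ | _, t⟩ <;> rfl

theorem numZeroRuns_false_cons (l : List Bool) :
    numZeroRuns (false :: l) + (if l.head? = some false then 1 else 0) = numZeroRuns l + 1 := by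
  rcases l with _ | ⟨_ | _, t⟩ <;> simp [numZeroRuns, List.destutter_cons']

theorem trc_cons_true {n : ℕ} (b : Bool) (x ω : Fin n → Bool) :
    trc (Fin.cons b x : Fin (n + 1) → Bool) (Fin.cons true ω) = trc x ω := by
  simp [trc, List.finRange_succ, List.filter_map, Function.comp_def]

theorem trc_cons_false {n : ℕ} (b : Bool) (x ω : Fin n → Bool) :
    trc (Fin.cons b x : Fin (n + 1) → Bool) (Fin.cons false ω) = b :: trc x ω := by
  simp [trc, List.finRange_succ, List.filter_map, Function.comp_def]

section

variable (q : ℝ) {n : ℕ}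

def patternProb (ω : Fin n → Bool) : ℝ := ∏ i, if ω i then q else 1 - q

theorem pow_wt_mul_pow_sub_wt (ω : Fin n → Bool) :
    q ^ wt ω * (1 - q) ^ (n - wt ω) = patternProb q ω := by
  rw [patternProb, prod_ite, prod_const, prod_const, filter_not,
    card_sdiff_of_subset (filter_subset _ _), card_univ, Fintype.card_fin]
  rfl

theorem patternProb_cons (d : Bool) (ω : Fin n → Bool) :
    patternProb q (Fin.cons d ω : Fin (n + 1) → Bool) =
      (if d then q else 1 - q) * patternProb q ω := by
  simp [patternProb, Fin.prod_univ_succ]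

theorem sum_patternProb : ∑ ω : Fin n → Bool, patternProb q ω = 1 := by
  simp only [patternProb]
  rw [← Fintype.prod_sum fun (_ : Fin n) (b : Bool) => if b then q else 1 - q]
  simp

theorem sum_patternProb_mul_cons (f : (Fin (n + 1) → Bool) → ℝ) :
    ∑ ω, patternProb q ω * f ω =
      q * ∑ ω, patternProb q ω * f (Fin.cons true ω) +
        (1 - q) * ∑ ω, patternProb q ω * f (Fin.cons false ω) := by
  rw [← (Fin.consEquiv fun _ => Bool).sum_comp, Fintype.sum_prod_type, Fintype.sum_bool]
  simp [Fin.consEquiv, patternProb_cons, mul_sum, mul_assoc]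

theorem sum_filter_cons_eq_false {M : Type*} [AddCommMonoid M] (b : Bool)
    (x : Fin n → Bool) (f : Fin (n + 1) → M) :
    ∑ j ∈ univ.filter (fun j => (Fin.cons b x : Fin (n + 1) → Bool) j = false), f j =
      (if b = false then f 0 else 0) + ∑ j ∈ univ.filter (fun j => x j = false), f j.succ := by
  simp [sum_filter, Fin.sum_univ_succ]

theorem sum_patternProb_mul_head_eq_false (x : Fin n → Bool) :
    ∑ ω, patternProb q ω * (if (trc x ω).head? = some false then 1 else 0) =
      (1 - q) * ∑ j ∈ univ.filter (fun j => x j = false), q ^ (j : ℕ) := by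
  induction n with
  | zero => simp [trc]
  | succ n ih =>
    obtain ⟨b, x, rfl⟩ : ∃ b x, ‹Fin (n + 1) → Bool› = Fin.cons b x :=
      ⟨_, _, (Fin.cons_self_tail _).symm⟩
    rw [sum_patternProb_mul_cons]
    simp only [trc_cons_true, trc_cons_false, ih, List.head?_cons, Option.some_inj, ← sum_mul,
      sum_patternProb, one_mul, sum_filter_cons_eq_false, Fin.val_zero, Fin.val_succ, pow_succ]
    split_ifs <;> ring

def zeroGapSum (x : Fin n → Bool) : ℝ :=
  ∑ i ∈ univ.filter (fun i => x i = false),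
    ∑ j ∈ univ.filter (fun j => x j = false ∧ i < j), q ^ ((j : ℕ) - (i : ℕ))

theorem zeroGapSum_cons (b : Bool) (x : Fin n → Bool) :
    zeroGapSum q (Fin.cons b x : Fin (n + 1) → Bool) =
      (if b = false then q * ∑ j ∈ univ.filter (fun j => x j = false), q ^ (j : ℕ) else 0) +
        zeroGapSum q x := by
  simp [zeroGapSum, sum_filter, Fin.sum_univ_succ, mul_sum, pow_succ, mul_comm]

theorem sum_patternProb_mul_numZeroRuns (hq : q ≠ 0) (x : Fin n → Bool) :
    ∑ ω, patternProb q ω * (numZeroRuns (trc x ω) : ℝ) =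
      (1 - q) * (#(univ.filter fun i => x i = false) - (1 - q) / q * zeroGapSum q x) := by
  induction n with
  | zero => simp [trc, numZeroRuns, zeroGapSum]
  | succ n ih =>
    obtain ⟨b, x, rfl⟩ : ∃ b x, ‹Fin (n + 1) → Bool› = Fin.cons b x :=
      ⟨_, _, (Fin.cons_self_tail _).symm⟩
    rw [sum_patternProb_mul_cons, card_filter, Fin.sum_univ_succ, ← card_filter, zeroGapSum_cons]
    cases b
    · have hcons : ∀ ω, (numZeroRuns (false :: trc x ω) : ℝ) =
          numZeroRuns (trc x ω) + 1 - if (trc x ω).head? = some false then 1 else 0 := fun ω => by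
        rw [eq_sub_iff_add_eq]; exact_mod_cast numZeroRuns_false_cons _
      simp only [trc_cons_true, trc_cons_false, hcons, mul_sub, mul_add, sum_sub_distrib,
        sum_add_distrib, mul_one, sum_patternProb, sum_patternProb_mul_head_eq_false, ih]
      simp only [Fin.cons_zero, ↓reduceIte, Fin.cons_succ, Nat.cast_add, Nat.cast_one]
      field_simp
      ring
    · simp only [trc_cons_true, trc_cons_false, numZeroRuns_true_cons, ih, Fin.cons_zero,
        Fin.cons_succ, Bool.true_eq_false, ↓reduceIte, zero_add]
      ring

end

theorem expected_zero_runs_general (n : ℕ) (x : Fin n → Bool)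
    (q : ℝ) (hq0 : 0 < q) :
    (∑ ω : Fin n → Bool,
        q ^ wt ω * (1 - q) ^ (n - wt ω) * (numZeroRuns (trc x ω) : ℝ)) =
      (1 - q) * ((n : ℝ) - ((univ.filter fun i : Fin n => x i = true).card : ℝ)
        - (1 - q) / q *
            ∑ i ∈ univ.filter (fun i : Fin n => x i = false),
              ∑ j ∈ univ.filter (fun j : Fin n => x j = false ∧ i < j),
                q ^ ((j : ℕ) - (i : ℕ))) := by
  have hcard : (#(univ.filter fun i : Fin n => x i = false) : ℝ) =
      n - #(univ.filter fun i : Fin n => x i = true) := by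
    rw [eq_sub_iff_add_eq, ← Nat.cast_add, add_comm]
    exact_mod_cast by simpa using card_filter_add_card_filter_not (s := univ) (x · = true)
  simp only [pow_wt_mul_pow_sub_wt, sum_patternProb_mul_numZeroRuns q hq0.ne', hcard, zeroGapSum]

/-- Expected number of runs of `0`s in a trace of `x` through the i.i.d. deletion
channel with deletion probability `q`. -/
theorem expected_zero_runs (n : ℕ) (hn : 1 ≤ n) (x : Fin n → Bool)
    (q : ℝ) (hq0 : 0 < q) (hq1 : q < 1) :
    (∑ ω : Fin n → Bool,
        q ^ wt ω * (1 - q) ^ (n - wt ω) * (numZeroRuns (trc x ω) : ℝ)) =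
      (1 - q) * ((n : ℝ) - ((univ.filter fun i : Fin n => x i = true).card : ℝ)
        - (1 - q) / q *
            ∑ i ∈ univ.filter (fun i : Fin n => x i = false),
              ∑ j ∈ univ.filter (fun j : Fin n => x j = false ∧ i < j),
                q ^ ((j : ℕ) - (i : ℕ))) :=
  expected_zero_runs_general n x q hq0
end

section
/- Let m ≥ 2, n = 2^m, and let x ∈ RM(m,1). For deletion probability q = 1/2 (so each deletion pattern ω ∈ {0,1}^n has probability 2^{−n}), the probability that the trace T_x(ω) is nonempty and its first bit equals the first bit x_1 of x is at least 9/16. -/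
open Finset

/-- The first-order Reed-Muller code `RM(m,1)`: evaluation vectors of affine
Boolean polynomials `u₀ + u₁x₁ + ⋯ + u_mx_m`, coordinates indexed by the
`2^m` evaluation points in lexicographic order. -/
def RM1 (m : ℕ) : Set (Fin (2 ^ m) → Bool) :=
  { x | ∃ (u0 : Bool) (u : Fin m → Bool), ∀ t : Fin (2 ^ m),
      x t = (u0 ^^ decide ((univ.filter fun i : Fin m =>
        u i = true ∧ (t : ℕ).testBit (i : ℕ) = true).card % 2 = 1)) }


lemma head?_filter_of {α : Type*} (p : α → Bool) :
    ∀ (l : List α) (j : ℕ) (hj : j < l.length),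
    p (l[j]) = true → (∀ i (h : i < j), p (l[i]'(h.trans hj)) = false) →
    (l.filter p).head? = some l[j] := by
  intro l
  induction l with
  | nil => intro j hj; simp at hj
  | cons a t ih =>
    intro j hj hpj hlt
    cases j with
    | zero =>
      simp only [List.getElem_cons_zero] at hpj ⊢
      rw [List.filter_cons_of_pos hpj]
      rfl
    | succ k =>
      have ha : p a = false := hlt 0 (Nat.succ_pos k)
      rw [List.filter_cons_of_neg (by simp [ha])]
      simp only [List.getElem_cons_succ] at hpj ⊢
      exact ih k (by simpa using hj) hpj (fun i h => by simpa using hlt (i+1) (by omega))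

lemma trc_head {n : ℕ} (x ω : Fin n → Bool) (j : ℕ) (hj : j < n)
    (h0 : ω ⟨j, hj⟩ = false) (h1 : ∀ i (h : i < j), ω ⟨i, h.trans hj⟩ = true) :
    (trc x ω).head? = some (x ⟨j, hj⟩) := by
  have hj' : j < (List.finRange n).length := by simpa using hj
  rw [trc, List.head?_map,
    head?_filter_of (fun i => decide (ω i = false)) (List.finRange n) j hj'
      (by simp [List.getElem_finRange, Fin.cast, h0])
      (fun i h => by simp [List.getElem_finRange, Fin.cast, h1 i h])]
  simp [List.getElem_finRange, Fin.cast]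

lemma card_cylinder {α : Type*} [Fintype α] [DecidableEq α] (S : Finset α) (v : α → Bool) :
    (univ.filter fun ω : α → Bool => ∀ i ∈ S, ω i = v i).card
      = 2 ^ (Fintype.card α - S.card) := by
  have e : {ω : α → Bool // ∀ i ∈ S, ω i = v i} ≃ ({i : α // i ∉ S} → Bool) :=
    { toFun := fun ω i => ω.1 i.1
      invFun := fun g => ⟨fun i => if h : i ∈ S then v i else g ⟨i, h⟩,
        fun i hi => dif_pos hi⟩
      left_inv := by
        rintro ⟨ω, hω⟩
        ext i
        by_cases h : i ∈ S
        · simp [dif_pos h, hω i h]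
        · simp [dif_neg h]
      right_inv := by
        intro g
        funext i
        exact dif_neg i.2 }
  have h1 : (univ.filter fun ω : α → Bool => ∀ i ∈ S, ω i = v i).card
      = Fintype.card {ω : α → Bool // ∀ i ∈ S, ω i = v i} :=
    (Fintype.card_subtype _).symm
  rw [h1, Fintype.card_congr e, Fintype.card_fun, Fintype.card_bool]
  congr 1
  rw [Fintype.card_subtype_compl, Fintype.card_coe]

lemma main_bound {n : ℕ} (hn : 4 ≤ n) (x : Fin n → Bool) (k : ℕ) (hk1 : 1 ≤ k) (hk3 : k ≤ 3)
    (hkn : k < n)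
    (hxk : x ⟨k, hkn⟩ = x ⟨0, by omega⟩) :
    9 * 2 ^ (n - 4) ≤ (univ.filter fun ω : Fin n → Bool =>
      (trc x ω).head? = some (x ⟨0, by omega⟩)).card := by
  set E : Finset (Fin n → Bool) := univ.filter fun ω : Fin n → Bool =>
      (trc x ω).head? = some (x ⟨0, by omega⟩) with hE
  set A : Finset (Fin n → Bool) := univ.filter fun ω : Fin n → Bool =>
      ∀ i ∈ ({⟨0, by omega⟩} : Finset (Fin n)), ω i = (fun _ => false) i with hA
  have hmemr : ∀ mm ∈ Finset.range (k+1), mm < n := by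
    intro mm hmm; rw [Finset.mem_range] at hmm; omega
  set SB : Finset (Fin n) := (Finset.range (k+1)).attachFin hmemr with hSB
  set vB : Fin n → Bool := fun i => decide ((i : ℕ) < k) with hvB
  set B : Finset (Fin n → Bool) := univ.filter fun ω : Fin n → Bool =>
      ∀ i ∈ SB, ω i = vB i with hB
  have hAcard : A.card = 2 ^ (n - 1) := by
    have h := card_cylinder ({(⟨0, by omega⟩ : Fin n)} : Finset (Fin n)) (fun _ => false)
    rw [Fintype.card_fin, Finset.card_singleton] at h
    rw [hA, ← h]
    congr 1
    ext ω
    simp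
  have hBcard : B.card = 2 ^ (n - (k+1)) := by
    have h := card_cylinder SB vB
    rw [Fintype.card_fin, hSB, Finset.card_attachFin, Finset.card_range] at h
    rw [hB, hSB, ← h]
    congr 1
    ext ω
    simp
  have hAE : A ⊆ E := by
    intro ω hω
    rw [hA, mem_filter] at hω
    rw [hE, mem_filter]
    refine ⟨mem_univ _, ?_⟩
    have h0 : ω ⟨0, by omega⟩ = false := hω.2 _ (Finset.mem_singleton_self _)
    exact trc_head x ω 0 (by omega) h0 (fun i h => absurd h (Nat.not_lt_zero i))
  have hBE : B ⊆ E := by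
    intro ω hω
    rw [hB, mem_filter] at hω
    rw [hE, mem_filter]
    refine ⟨mem_univ _, ?_⟩
    have h0 : ω ⟨k, hkn⟩ = false := by
      have hm := hω.2 ⟨k, hkn⟩ (by
        rw [hSB, Finset.mem_attachFin, Finset.mem_range]
        exact Nat.lt_succ_self k)
      rw [hm]
      exact decide_eq_false (Nat.lt_irrefl k)
    have h1 : ∀ i (h : i < k), ω ⟨i, h.trans hkn⟩ = true := by
      intro i h
      have hm := hω.2 ⟨i, h.trans hkn⟩ (by
        rw [hSB, Finset.mem_attachFin, Finset.mem_range]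
        exact Nat.lt_succ_of_lt h)
      rw [hm]
      exact decide_eq_true h
    rw [trc_head x ω k hkn h0 h1, hxk]
  have hdisj : Disjoint A B := by
    rw [Finset.disjoint_left]
    intro ω hωA hωB
    rw [hA, mem_filter] at hωA
    rw [hB, mem_filter] at hωB
    have h1 : ω ⟨0, by omega⟩ = false := hωA.2 _ (Finset.mem_singleton_self _)
    have h2 := hωB.2 ⟨0, by omega⟩ (by
      rw [hSB, Finset.mem_attachFin, Finset.mem_range]
      exact Nat.succ_pos k)
    have h3 : vB ⟨0, by omega⟩ = true := decide_eq_true hk1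
    rw [h1, h3] at h2
    exact absurd h2 (by simp)
  calc 9 * 2 ^ (n - 4) = 2 ^ (n - 1) + 2 ^ (n - 4) := by
        rw [show n - 1 = (n - 4) + 3 by omega, pow_add]; ring
    _ ≤ A.card + B.card := by
        rw [hAcard, hBcard]
        exact Nat.add_le_add_left (Nat.pow_le_pow_right (by norm_num) (by omega)) _
    _ = (A ∪ B).card := (Finset.card_union_of_disjoint hdisj).symm
    _ ≤ E.card := Finset.card_le_card (Finset.union_subset hAE hBE)

/-- For `x ∈ RM(m,1)` and deletion probability `q = 1/2`, the probability that a
trace of `x` is nonempty with first bit equal to the first bit of `x` is `≥ 9/16`. -/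
theorem RM1_first_bit_prob (m : ℕ) (hm : 2 ≤ m) (x : Fin (2 ^ m) → Bool)
    (hx : x ∈ RM1 m) :
    (9:ℝ)/16 ≤ ((univ.filter fun ω : Fin (2 ^ m) → Bool =>
        (trc x ω).head? = some (x ⟨0, by positivity⟩)).card : ℝ) / 2 ^ (2 ^ m) := by
  obtain ⟨u0, u, hu⟩ := hx
  have hn : 4 ≤ 2 ^ m := by
    calc 4 = 2 ^ 2 := by norm_num
    _ ≤ 2 ^ m := Nat.pow_le_pow_right (by norm_num) hm
  have hm0 : 0 < m := by omega
  have hm1 : 1 < m := by omega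
  set i0 : Fin m := ⟨0, hm0⟩ with hi0
  set i1 : Fin m := ⟨1, hm1⟩ with hi1
  have hx0 : x ⟨0, by omega⟩ = u0 := by
    rw [hu]
    have hf : (univ.filter fun i : Fin m =>
        u i = true ∧ ((⟨0, by omega⟩ : Fin (2^m)) : ℕ).testBit (i : ℕ) = true) = ∅ := by
      ext i
      simp [Nat.zero_testBit]
    rw [hf]
    simp
  have hkey : ∃ (k : ℕ) (hkn : k < 2 ^ m), 1 ≤ k ∧ k ≤ 3 ∧
      x ⟨k, hkn⟩ = x ⟨0, by omega⟩ := by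
    by_cases h0 : u i0 = true
    · by_cases h1 : u i1 = true
      · refine ⟨3, by omega, by norm_num, le_refl 3, ?_⟩
        rw [hu, hx0]
        have hf : (univ.filter fun i : Fin m =>
            u i = true ∧ ((⟨3, by omega⟩ : Fin (2^m)) : ℕ).testBit (i : ℕ) = true)
            = {i0, i1} := by
          ext i
          simp only [mem_filter, mem_univ, true_and, Finset.mem_insert, Finset.mem_singleton]
          constructor
          · rintro ⟨hui, htb⟩
            have htb' : Nat.testBit 3 (i : ℕ) = true := htb
            rw [show (3:ℕ) = 2 ^ 2 - 1 by norm_num, Nat.testBit_two_pow_sub_one] at htb'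
            have hlt : (i : ℕ) < 2 := by simpa using htb'
            have : (i : ℕ) = 0 ∨ (i : ℕ) = 1 := by omega
            rcases this with h | h
            · left; exact Fin.ext h
            · right; exact Fin.ext h
          · rintro (rfl | rfl)
            · refine ⟨h0, ?_⟩
              show Nat.testBit 3 (i0 : ℕ) = true
              rw [show (3:ℕ) = 2 ^ 2 - 1 by norm_num, Nat.testBit_two_pow_sub_one]
              rw [hi0]
              simp
            · refine ⟨h1, ?_⟩
              show Nat.testBit 3 (i1 : ℕ) = true
              rw [show (3:ℕ) = 2 ^ 2 - 1 by norm_num, Nat.testBit_two_pow_sub_one]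
              rw [hi1]
              simp
        rw [hf]
        have hne : i0 ≠ i1 := by
          intro h
          have := congrArg Fin.val h
          rw [hi0, hi1] at this
          simp at this
        rw [Finset.card_insert_of_notMem (by simp [hne]), Finset.card_singleton]
        simp
      · refine ⟨2, by omega, by norm_num, by norm_num, ?_⟩
        rw [hu, hx0]
        have hf : (univ.filter fun i : Fin m =>
            u i = true ∧ ((⟨2, by omega⟩ : Fin (2^m)) : ℕ).testBit (i : ℕ) = true) = ∅ := by
          ext i
          simp only [mem_filter, mem_univ, true_and, Finset.notMem_empty, iff_false, not_and]
          intro hui htb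
          have htb' : Nat.testBit 2 (i : ℕ) = true := htb
          rw [show (2:ℕ) = 2 ^ 1 by norm_num, Nat.testBit_two_pow] at htb'
          have hv : (i : ℕ) = 1 := by
            have := by simpa using htb'
            omega
          have hii : i = i1 := Fin.ext hv
          rw [hii] at hui
          exact h1 hui
        rw [hf]
        simp
    · refine ⟨1, by omega, le_refl 1, by norm_num, ?_⟩
      rw [hu, hx0]
      have hf : (univ.filter fun i : Fin m =>
          u i = true ∧ ((⟨1, by omega⟩ : Fin (2^m)) : ℕ).testBit (i : ℕ) = true) = ∅ := by
        ext i
        simp only [mem_filter, mem_univ, true_and, Finset.notMem_empty, iff_false, not_and]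
        intro hui htb
        have htb' : Nat.testBit 1 (i : ℕ) = true := htb
        rw [show (1:ℕ) = 2 ^ 0 by norm_num, Nat.testBit_two_pow] at htb'
        have hv : (i : ℕ) = 0 := by
          have := by simpa using htb'
          omega
        have hii : i = i0 := Fin.ext hv
        rw [hii] at hui
        exact h0 hui
      rw [hf]
      simp
  obtain ⟨k, hkn, hk1, hk3, hxk⟩ := hkey
  have key := main_bound hn x k hk1 hk3 hkn hxk
  rw [le_div_iff₀ (by positivity)]
  calc (9:ℝ)/16 * 2 ^ (2 ^ m) = 9 * 2 ^ (2 ^ m - 4) := by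
        rw [show (2:ℝ) ^ (2 ^ m) = 2 ^ (2 ^ m - 4) * 2 ^ 4 by
          rw [← pow_add]; congr 1; omega]
        ring
    _ ≤ _ := by exact_mod_cast key
end

section
/- Let m ≥ 4 and n = 2^m. For any pair of distinct codewords x, y ∈ RM(m,1) having the same first bit (x_1 = y_1), the coefficients satisfy |α_x − α_y| ≥ 0.06 − 3·Σ_{k=16}^{n/2} k·(1/2)^k. -/
open Finset

/-- The coefficient `α_x`. -/
noncomputable def alphaC {n : ℕ} (x : Fin n → Bool) : ℝ :=
  (∑ i ∈ univ.filter (fun i : Fin n => x i = false),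
     ∑ j ∈ univ.filter (fun j : Fin n => x j = false ∧ i < j),
       ((1:ℝ)/2) ^ ((j : ℕ) - (i : ℕ)))
  + ∑ i ∈ univ.filter (fun i : Fin n => x i = true),
      ∑ j ∈ univ.filter (fun j : Fin n => x j = true ∧ i < j),
        ((1:ℝ)/2) ^ ((j : ℕ) - (i : ℕ))

/-- The coefficient `β_x`. -/
noncomputable def betaC {n : ℕ} (x : Fin n → Bool) : ℝ :=
  (∑ i ∈ univ.filter (fun i : Fin n => x i = false),
     ∑ j ∈ univ.filter (fun j : Fin n => x j = false ∧ i < j),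
       ((1:ℝ)/2) ^ (n - ((j : ℕ) - (i : ℕ))))
  + ∑ i ∈ univ.filter (fun i : Fin n => x i = true),
      ∑ j ∈ univ.filter (fun j : Fin n => x j = true ∧ i < j),
        ((1:ℝ)/2) ^ (n - ((j : ℕ) - (i : ℕ)))

/-- The coefficient `γ_x`. -/
noncomputable def gammaC {n : ℕ} (x : Fin n → Bool) : ℝ :=
  (∑ i ∈ univ.filter (fun i : Fin n => x i = false),
     ∑ j ∈ univ.filter (fun j : Fin n => x j = true ∧ i < j),
       ((1:ℝ)/2) ^ (n - ((j : ℕ) - (i : ℕ))))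
  + ∑ i ∈ univ.filter (fun i : Fin n => x i = true),
      ∑ j ∈ univ.filter (fun j : Fin n => x j = false ∧ i < j),
        ((1:ℝ)/2) ^ (n - ((j : ℕ) - (i : ℕ)))

/-- The coefficient `δ_x`. -/
noncomputable def deltaC {n : ℕ} (x : Fin n → Bool) : ℝ :=
  (∑ i ∈ univ.filter (fun i : Fin n => x i = false),
     ∑ j ∈ univ.filter (fun j : Fin n => x j = true ∧ i < j),
       ((1:ℝ)/2) ^ ((j : ℕ) - (i : ℕ)))
  + ∑ i ∈ univ.filter (fun i : Fin n => x i = true),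
      ∑ j ∈ univ.filter (fun j : Fin n => x j = false ∧ i < j),
        ((1:ℝ)/2) ^ ((j : ℕ) - (i : ℕ))


/-!
Encode a codeword by signs: `(-1)^(x t) = ± W_a(t)` with the Walsh function
`W_a(t) = ∏_{i<m} a_i^{t_i}`, `a_i = ±1`. Since `[x_i = x_j] = (1 + (-1)^(x_i + x_j)) / 2`,
`α_x = (A_n + T_m(a)) / 2` with `A_n` independent of `x` and the correlation
`T_m(a) = ∑_{i<j<2^m} 2^{i-j} W_a(i) W_a(j)`. Splitting `[0, 2^{m+1})` into halves gives
`T_{m+1} = 2 T_m + c_m`, and the generating-function identity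
`∑_t z^t W_a(t) = ∏_i (1 + a_i z^{2^i})` at `z = 2, 1/2` evaluates
`c_m = ± ∏_{i<m} (1 + ρ_i)^2 / 2` with `ρ_i = a_i 2^{-2^i}`.

If `a` and `b` first differ at `s`, everything below `s` cancels and
`T_m(a) - T_m(b) = 2^J c_s(a) (R_a + R_b)`, where `R` is the remaining tail of the recursion
normalised by its first term. A two-sided invariant (`TailBounds`) carried down this tail gives
`R_a + R_b ≥ 2^{1-J} (1 - ρ_s^2)`, so
`|T_m(a) - T_m(b)| ≥ ∏_{i≤s} (1 - 2^{-2^i})^2 ≥ (15/43)^2 > 0.12`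
and `|α_x - α_y| ≥ 0.06`.
-/

namespace RM1AlphaGap

def boolSign (b : Bool) : ℝ := if b then -1 else 1

lemma boolSign_xor (p q : Bool) : boolSign (p ^^ q) = boolSign p * boolSign q := by
  cases p <;> cases q <;> norm_num [boolSign]

lemma boolSign_mul_self (p : Bool) : boolSign p * boolSign p = 1 := by
  cases p <;> norm_num [boolSign]

lemma boolSign_injective : Function.Injective boolSign := by
  intro p q; cases p <;> cases q <;> norm_num [boolSign]

lemma ite_eq_eq_boolSign (p q : Bool) (v : ℝ) :
    (if p = q then v else 0) = (v + v * (boolSign p * boolSign q)) / 2 := by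
  cases p <;> cases q <;> norm_num [boolSign]

lemma boolSign_decide_mod_two_eq_one (k : ℕ) : boolSign (decide (k % 2 = 1)) = (-1) ^ k := by
  rw [neg_one_pow_eq_pow_mod_two]
  rcases Nat.mod_two_eq_zero_or_one k with h | h <;> simp [boolSign, h]

noncomputable def pairSum (w : ℕ → ℝ) (n : ℕ) : ℝ :=
  ∑ j ∈ range n, ∑ i ∈ range j, (1 / 2 : ℝ) ^ (j - i) * (w i * w j)

lemma sum_fin_ite_lt (f : ℕ → ℕ → ℝ) (n : ℕ) :
    ∑ i : Fin n, ∑ j : Fin n, (if i < j then f i j else 0)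
      = ∑ j ∈ range n, ∑ i ∈ range j, f i j := by
  rw [← Fin.sum_univ_eq_sum_range (fun j => ∑ i ∈ range j, f i j), Finset.sum_comm]
  refine sum_congr rfl fun j _ => ?_
  have hj : (range n).filter (· < (j : ℕ)) = range j := by
    ext i; simp only [mem_filter, mem_range]; omega
  rw [← hj, sum_filter,
    ← Fin.sum_univ_eq_sum_range (fun i => if i < (j : ℕ) then f i j else 0)]
  rfl

lemma alphaC_eq_sum_ite {n : ℕ} (x : Fin n → Bool) :
    alphaC x = ∑ i, ∑ j,
      if i < j then (if x i = x j then (1 / 2 : ℝ) ^ ((j : ℕ) - i) else 0) else 0 := by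
  simp only [alphaC, sum_filter, ← sum_add_distrib]
  refine sum_congr rfl fun i _ => ?_
  cases hxi : x i <;> simp only [Bool.true_eq_false, Bool.false_eq_true, if_true, if_false,
    add_zero, zero_add] <;>
    refine sum_congr rfl fun j _ => ?_ <;> cases x j <;> by_cases hij : i < j <;> simp [hij]

lemma alphaC_eq_pairSum {n : ℕ} (x : Fin n → Bool) (c : ℝ) (w : ℕ → ℝ) (hc : c * c = 1)
    (hw : ∀ t, boolSign (x t) = c * w t) :
    alphaC x = (pairSum 1 n + pairSum w n) / 2 := by
  have hsign : ∀ i j, boolSign (x i) * boolSign (x j) = w i * w j := fun i j => by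
    rw [hw, hw, mul_mul_mul_comm, hc, one_mul]
  simp only [pairSum, ← sum_fin_ite_lt, Pi.one_apply, mul_one, alphaC_eq_sum_ite,
    ite_eq_eq_boolSign, hsign]
  simp only [← sum_add_distrib, sum_div]
  refine sum_congr rfl fun i _ => sum_congr rfl fun j _ => ?_
  split_ifs <;> ring

lemma half_pow_sub {i k : ℕ} (h : i ≤ k) : (1 / 2 : ℝ) ^ (k - i) = 2 ^ i * (1 / 2) ^ k := by
  obtain ⟨d, rfl⟩ := Nat.exists_eq_add_of_le h
  rw [Nat.add_sub_cancel_left, pow_add, ← mul_assoc, ← mul_pow]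
  norm_num

theorem pairSum_add_self (w v : ℕ → ℝ) (M : ℕ) (c : ℝ) (hlo : ∀ t < M, v t = w t)
    (hhi : ∀ t < M, v (M + t) = c * w t) :
    pairSum v (M + M) = (1 + c ^ 2) * pairSum w M
      + c * (1 / 2) ^ M * (∑ t ∈ range M, 2 ^ t * w t)
        * ∑ t ∈ range M, (1 / 2) ^ t * w t := by
  have hlow : ∀ j ∈ range M, ∑ i ∈ range j, (1 / 2 : ℝ) ^ (j - i) * (v i * v j)
      = ∑ i ∈ range j, (1 / 2 : ℝ) ^ (j - i) * (w i * w j) := fun j hj =>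
    sum_congr rfl fun i hi => by
      rw [hlo i (by simp at hi hj; omega), hlo j (mem_range.mp hj)]
  have hhigh : ∀ j ∈ range M,
      ∑ i ∈ range (M + j), (1 / 2 : ℝ) ^ (M + j - i) * (v i * v (M + j))
      = c * (1 / 2) ^ M * (∑ t ∈ range M, 2 ^ t * w t) * ((1 / 2) ^ j * w j)
        + c ^ 2 * ∑ i ∈ range j, (1 / 2 : ℝ) ^ (j - i) * (w i * w j) := fun j hj => by
    rw [sum_range_add, mul_sum, mul_sum, sum_mul]
    congr 1
    · refine sum_congr rfl fun i hi => ?_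
      rw [half_pow_sub (by simp at hi; omega), hlo i (mem_range.mp hi), hhi j (mem_range.mp hj),
        pow_add]
      ring
    · refine sum_congr rfl fun i hi => ?_
      rw [Nat.add_sub_add_left, hhi i (by simp at hi hj; omega), hhi j (mem_range.mp hj)]
      ring
  rw [pairSum, pairSum, sum_range_add, sum_congr rfl hlow, sum_congr rfl hhigh, sum_add_distrib,
    ← mul_sum, ← mul_sum]
  ring

section Walsh

variable (a : ℕ → ℝ)

noncomputable def walsh (m t : ℕ) : ℝ := ∏ i ∈ range m, if t.testBit i then a i else 1

lemma walsh_zero_right (m : ℕ) : walsh a m 0 = 1 := by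
  simp [walsh]

lemma walsh_succ_of_lt {m t : ℕ} (ht : t < 2 ^ m) : walsh a (m + 1) t = walsh a m t := by
  simp [walsh, prod_range_succ, Nat.testBit_lt_two_pow ht]

lemma walsh_succ_two_pow_add {m t : ℕ} (ht : t < 2 ^ m) :
    walsh a (m + 1) (2 ^ m + t) = a m * walsh a m t := by
  rw [walsh, prod_range_succ, Nat.testBit_two_pow_add_eq, Nat.testBit_lt_two_pow ht, mul_comm]
  simp only [Bool.not_false, if_true, walsh]
  congr 1
  exact prod_congr rfl fun i hi => by rw [Nat.testBit_two_pow_add_gt (mem_range.mp hi)]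

lemma walsh_congr {b : ℕ → ℝ} {m : ℕ} (hab : ∀ i < m, a i = b i) (t : ℕ) :
    walsh a m t = walsh b m t :=
  prod_congr rfl fun i hi => by rw [hab i (mem_range.mp hi)]

lemma sum_range_two_pow_succ (f : ℕ → ℝ) (m : ℕ) :
    ∑ t ∈ range (2 ^ (m + 1)), f t
      = ∑ t ∈ range (2 ^ m), f t + ∑ t ∈ range (2 ^ m), f (2 ^ m + t) := by
  rw [pow_succ, mul_two, sum_range_add]

theorem sum_pow_mul_walsh (z : ℝ) (m : ℕ) :
    ∑ t ∈ range (2 ^ m), z ^ t * walsh a m t = ∏ i ∈ range m, (1 + a i * z ^ 2 ^ i) := by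
  induction m with
  | zero => simp [walsh]
  | succ m ih =>
    rw [sum_range_two_pow_succ, prod_range_succ, ← ih, mul_comm, add_mul, one_mul, mul_sum]
    congr 1
    · exact sum_congr rfl fun t ht => by rw [walsh_succ_of_lt a (mem_range.mp ht)]
    · refine sum_congr rfl fun t ht => ?_
      rw [walsh_succ_two_pow_add a (mem_range.mp ht), pow_add]
      ring

end Walsh

theorem exists_boolSign_eq_walsh {m : ℕ} {x : Fin (2 ^ m) → Bool} (hx : x ∈ RM1 m) :
    ∃ a : ℕ → ℝ, (∀ i, a i = 1 ∨ a i = -1) ∧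
      ∀ t : Fin (2 ^ m), boolSign (x t) = boolSign (x ⟨0, by positivity⟩) * walsh a m t := by
  obtain ⟨u0, u, hu⟩ := hx
  set a : ℕ → ℝ := fun i => if h : i < m then boolSign (u ⟨i, h⟩) else 1
  have hsign : ∀ t : Fin (2 ^ m), boolSign (x t) = boolSign u0 * walsh a m t := fun t => by
    rw [hu t, boolSign_xor, boolSign_decide_mod_two_eq_one, ← prod_const, prod_filter, walsh,
      ← Fin.prod_univ_eq_prod_range (fun i => if (t : ℕ).testBit i then a i else 1)]
    congr 1
    refine prod_congr rfl fun i _ => ?_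
    simp only [a, i.isLt, dif_pos, Fin.eta]
    cases u i <;> cases (t : ℕ).testBit i <;> simp [boolSign]
  refine ⟨a, fun i => ?_, fun t => ?_⟩
  · simp only [a]
    split_ifs
    · cases u ⟨i, _⟩ <;> simp [boolSign]
    · exact Or.inl rfl
  · rw [hsign, hsign, Fin.val_mk, walsh_zero_right, mul_one]

section Corr

variable (a : ℕ → ℝ)

noncomputable def walshCorr (m : ℕ) : ℝ := pairSum (walsh a m) (2 ^ m)

noncomputable def rho (i : ℕ) : ℝ := a i * (1 / 2) ^ 2 ^ i

noncomputable def corrIncr (k : ℕ) : ℝ :=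
  (∏ i ∈ range (k + 1), a i) * (∏ i ∈ range k, (1 + rho a i) ^ 2) / 2

-- `tailRatio a t J = ∑_{j ≤ J} 2^{-j} corrIncr a (t + j) / corrIncr a t`.
noncomputable def tailRatio : ℕ → ℕ → ℝ
  | _, 0 => 1
  | t, J + 1 => 1 + a (t + 1) * (1 + rho a t) ^ 2 * tailRatio (t + 1) J / 2

variable {a}

lemma half_pow_two_pow_mul_prod (ha : ∀ i, a i = 1 ∨ a i = -1) (m : ℕ) :
    (1 / 2) ^ 2 ^ m * ∏ i ∈ range m, (1 + a i * 2 ^ 2 ^ i) * (1 + a i * (1 / 2) ^ 2 ^ i)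
      = (∏ i ∈ range m, a i) * (∏ i ∈ range m, (1 + rho a i) ^ 2) / 2 := by
  induction m with
  | zero => norm_num
  | succ m ih =>
    set r : ℝ := (1 / 2) ^ 2 ^ m
    have hqr : (2 : ℝ) ^ 2 ^ m * r = 1 := by rw [← mul_pow]; norm_num
    have ha2 : a m ^ 2 = 1 := by rcases ha m with h | h <;> rw [h] <;> norm_num
    have hfac : r * ((1 + a m * 2 ^ 2 ^ m) * (1 + a m * r)) = a m * (1 + a m * r) ^ 2 := by
      linear_combination (a m + a m ^ 2 * r) * hqr - (r + a m * r ^ 2) * ha2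
    calc (1 / 2 : ℝ) ^ 2 ^ (m + 1)
          * ∏ i ∈ range (m + 1), (1 + a i * 2 ^ 2 ^ i) * (1 + a i * (1 / 2) ^ 2 ^ i)
        = (r * ∏ i ∈ range m, (1 + a i * 2 ^ 2 ^ i) * (1 + a i * (1 / 2) ^ 2 ^ i))
          * (r * ((1 + a m * 2 ^ 2 ^ m) * (1 + a m * r))) := by
          rw [prod_range_succ, pow_succ, pow_mul]; ring
      _ = _ := by rw [ih, hfac, prod_range_succ, prod_range_succ, rho]; ring

theorem walshCorr_succ (ha : ∀ i, a i = 1 ∨ a i = -1) (m : ℕ) :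
    walshCorr a (m + 1) = 2 * walshCorr a m + corrIncr a m := by
  have ha2 : a m ^ 2 = 1 := by rcases ha m with h | h <;> rw [h] <;> norm_num
  rw [walshCorr, pow_succ, mul_two,
    pairSum_add_self (walsh a m) _ _ (a m) (fun t => walsh_succ_of_lt a)
      (fun t => walsh_succ_two_pow_add a),
    sum_pow_mul_walsh, sum_pow_mul_walsh, ha2, mul_assoc (a m * _), ← prod_mul_distrib,
    mul_assoc (a m),
    half_pow_two_pow_mul_prod ha, corrIncr, prod_range_succ, walshCorr]
  ring

lemma corrIncr_succ (t : ℕ) :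
    corrIncr a (t + 1) = a (t + 1) * (1 + rho a t) ^ 2 * corrIncr a t := by
  simp only [corrIncr, prod_range_succ _ (t + 1), prod_range_succ _ t]
  ring

theorem walshCorr_add (ha : ∀ i, a i = 1 ∨ a i = -1) (J t : ℕ) :
    walshCorr a (t + J + 1)
      = 2 ^ (J + 1) * walshCorr a t + 2 ^ J * corrIncr a t * tailRatio a t J := by
  induction J generalizing t with
  | zero => simp [walshCorr_succ ha, tailRatio]
  | succ J ih =>
    rw [show t + (J + 1) + 1 = t + 1 + J + 1 by ring, ih, walshCorr_succ ha, corrIncr_succ,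
      tailRatio]
    ring

lemma abs_rho (ha : ∀ i, a i = 1 ∨ a i = -1) (t : ℕ) : |rho a t| = (1 / 2) ^ 2 ^ t := by
  rcases ha t with h | h <;> simp [rho, h]

lemma abs_rho_le_half (ha : ∀ i, a i = 1 ∨ a i = -1) (t : ℕ) : |rho a t| ≤ 1 / 2 := by
  rw [abs_rho ha]
  exact pow_le_of_le_one (by norm_num) (by norm_num) (by positivity)

lemma rho_succ (ha : ∀ i, a i = 1 ∨ a i = -1) (t : ℕ) :
    rho a (t + 1) = a (t + 1) * rho a t ^ 2 := by
  rcases ha t with h | h <;> simp [rho, h, pow_succ, pow_mul]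

end Corr

def TailBounds (ρ h S : ℝ) : Prop :=
  (1 - ρ) * S ≤ 2 - h * (1 + ρ) ∧
    (1 + ρ ^ 2) * (1 - S) ≤ (1 + ρ) ^ 2 * (1 - h * (1 - ρ ^ 2))

lemma tailBounds_one {ρ : ℝ} : TailBounds ρ 1 1 :=
  ⟨by linarith, by nlinarith [sq_nonneg ((1 + ρ) * ρ)]⟩

lemma TailBounds.step {ρ h S b : ℝ} (hb : b = 1 ∨ b = -1) (hρ : |ρ| ≤ 1 / 2) (hh : 0 < h)
    (hh1 : h ≤ 1) (H : TailBounds (b * ρ ^ 2) h S) :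
    TailBounds ρ (h / 2) (1 + b * (1 + ρ) ^ 2 * S / 2) := by
  obtain ⟨hU, hL⟩ := H
  obtain ⟨hρl, hρu⟩ := abs_le.mp hρ
  have hρ2 : ρ ^ 2 ≤ 1 / 4 := by nlinarith
  have hρ4 : 0 ≤ h * (1 - ρ ^ 4) := mul_nonneg hh.le (by nlinarith)
  rcases hb with rfl | rfl
  · have hS : -(1 + ρ ^ 2) * S ≤ 2 - h * (1 - ρ ^ 2) := by
      nlinarith [mul_nonneg hh.le (sq_nonneg ρ), pow_le_pow_left₀ (sq_nonneg ρ) hρ2 2,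
        mul_nonneg (mul_nonneg hh.le (sq_nonneg ρ)) (sq_nonneg ρ)]
    constructor
    · nlinarith [mul_le_mul_of_nonneg_left hU (show (0 : ℝ) ≤ (1 + ρ) / 2 by linarith),
        mul_nonneg (mul_nonneg hh.le (sq_nonneg ρ)) (show (0 : ℝ) ≤ 1 + ρ by linarith)]
    · nlinarith [mul_le_mul_of_nonneg_left hS (sq_nonneg (1 + ρ))]
  · have hS : (1 + ρ ^ 2) * S ≤ 2 - h * (1 - ρ ^ 2) := by nlinarith
    have hS0 : 0 ≤ S := by
      have : (1 - ρ ^ 2) ^ 2 * (1 - h * (1 - ρ ^ 4)) ≤ 1 + ρ ^ 4 := by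
        nlinarith [mul_nonneg (sq_nonneg (1 - ρ ^ 2)) hρ4, sq_nonneg (ρ ^ 2)]
      nlinarith [sq_nonneg (ρ ^ 2)]
    constructor
    · have h1 : (0 : ℝ) ≤ 1 - ρ := by linarith
      nlinarith [mul_nonneg (mul_nonneg h1 (sq_nonneg (1 + ρ))) hS0]
    · nlinarith [mul_le_mul_of_nonneg_left hS (sq_nonneg (1 + ρ))]

section Gap

variable {a b : ℕ → ℝ} {s : ℕ}

theorem tailBounds_tailRatio (ha : ∀ i, a i = 1 ∨ a i = -1) (J t : ℕ) :
    TailBounds (rho a t) ((1 / 2) ^ J) (tailRatio a t J) := by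
  induction J generalizing t with
  | zero => exact tailBounds_one
  | succ J ih =>
    rw [tailRatio, pow_succ, mul_one_div]
    exact (rho_succ ha t ▸ ih (t + 1)).step (ha (t + 1)) (abs_rho_le_half ha t) (by positivity)
      (pow_le_one₀ (by norm_num) (by norm_num))

lemma walshCorr_congr (hab : ∀ i < s, a i = b i) : walshCorr a s = walshCorr b s := by
  rw [walshCorr, walshCorr, funext (walsh_congr a hab)]

lemma corrIncr_eq_neg (hab : ∀ i < s, a i = b i) (hs : b s = -a s) :
    corrIncr b s = -corrIncr a s := by
  have hprod : ∀ f : ℕ → ℝ → ℝ,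
      ∏ i ∈ range s, f i (b i) = ∏ i ∈ range s, f i (a i) :=
    fun f => prod_congr rfl fun i hi => by rw [hab i (mem_range.mp hi)]
  simp only [corrIncr, prod_range_succ, hs, rho, hprod fun i c => c,
    hprod fun i c => (1 + c * (1 / 2) ^ 2 ^ i) ^ 2]
  ring

theorem walshCorr_sub_eq (ha : ∀ i, a i = 1 ∨ a i = -1) (hb : ∀ i, b i = 1 ∨ b i = -1)
    (hab : ∀ i < s, a i = b i) (hs : b s = -a s) (J : ℕ) :
    walshCorr a (s + J + 1) - walshCorr b (s + J + 1)
      = 2 ^ J * corrIncr a s * (tailRatio a s J + tailRatio b s J) := by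
  rw [walshCorr_add ha, walshCorr_add hb, walshCorr_congr hab, corrIncr_eq_neg hab hs]
  ring

lemma abs_corrIncr (ha : ∀ i, a i = 1 ∨ a i = -1) (k : ℕ) :
    |corrIncr a k| = (∏ i ∈ range k, (1 + rho a i) ^ 2) / 2 := by
  have hsign : |∏ i ∈ range (k + 1), a i| = 1 := by
    rw [abs_prod]
    exact prod_eq_one fun i _ => by rcases ha i with h | h <;> simp [h]
  rw [corrIncr, abs_div, abs_mul, hsign, one_mul, abs_two,
    abs_of_nonneg (prod_nonneg fun i _ => sq_nonneg _)]

lemma tailRatio_add_ge (ha : ∀ i, a i = 1 ∨ a i = -1) (hb : ∀ i, b i = 1 ∨ b i = -1)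
    (hρ : rho b s = -rho a s) (J : ℕ) :
    2 * (1 / 2) ^ J * (1 - rho a s ^ 2) ≤ tailRatio a s J + tailRatio b s J := by
  have hLa := (tailBounds_tailRatio ha J s).2
  have hLb := (tailBounds_tailRatio hb J s).2
  rw [hρ] at hLb
  have key : (1 + rho a s ^ 2) * (2 * (1 / 2) ^ J * (1 - rho a s ^ 2))
      ≤ (1 + rho a s ^ 2) * (tailRatio a s J + tailRatio b s J) := by
    linarith
  exact le_of_mul_le_mul_left key (by positivity)

theorem le_abs_walshCorr_sub (ha : ∀ i, a i = 1 ∨ a i = -1) (hb : ∀ i, b i = 1 ∨ b i = -1)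
    (hab : ∀ i < s, a i = b i) (hs : b s = -a s) (J : ℕ) :
    (∏ i ∈ range s, (1 + rho a i) ^ 2) * (1 - rho a s ^ 2)
      ≤ |walshCorr a (s + J + 1) - walshCorr b (s + J + 1)| := by
  have hsum := tailRatio_add_ge (s := s) ha hb (by rw [rho, rho, hs, neg_mul]) J
  have hρ2 : rho a s ^ 2 ≤ 1 := by
    rw [← sq_abs]; nlinarith [abs_rho_le_half ha s, abs_nonneg (rho a s)]
  have hsum0 : 0 ≤ tailRatio a s J + tailRatio b s J :=
    le_trans (mul_nonneg (by positivity) (by linarith)) hsum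
  rw [walshCorr_sub_eq ha hb hab hs, abs_mul, abs_mul, abs_corrIncr ha, abs_of_nonneg hsum0,
    abs_of_pos (by positivity)]
  calc (∏ i ∈ range s, (1 + rho a i) ^ 2) * (1 - rho a s ^ 2)
      = 2 ^ J * ((∏ i ∈ range s, (1 + rho a i) ^ 2) / 2)
          * (2 * (1 / 2) ^ J * (1 - rho a s ^ 2)) := by
        rw [one_div_pow]; field_simp
    _ ≤ _ := by gcongr

end Gap

-- `15/43` makes the base case `k = 3` an equality.
lemma prod_one_sub_half_pow_two_pow_ge {k : ℕ} (hk : 3 ≤ k) :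
    15 / 43 * (1 + 2 * (1 / 2 : ℝ) ^ 2 ^ k)
      ≤ ∏ i ∈ range k, (1 - (1 / 2 : ℝ) ^ 2 ^ i) := by
  induction k, hk using Nat.le_induction with
  | base => norm_num [prod_range_succ]
  | succ k hk ih =>
    have hr : (1 / 2 : ℝ) ^ 2 ^ k ≤ 1 / 4 :=
      calc (1 / 2 : ℝ) ^ 2 ^ k ≤ (1 / 2) ^ 2 :=
            pow_le_pow_of_le_one (by norm_num) (by norm_num) (Nat.le_self_pow (by omega) 2)
        _ = 1 / 4 := by norm_num
    have hr0 : 0 < (1 / 2 : ℝ) ^ 2 ^ k := by positivity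
    rw [prod_range_succ, pow_succ, pow_mul]
    nlinarith [mul_le_mul_of_nonneg_right ih (show (0 : ℝ) ≤ 1 - (1 / 2) ^ 2 ^ k by linarith)]

lemma fifteen_div_forty_three_le_prod (k : ℕ) :
    15 / 43 ≤ ∏ i ∈ range k, (1 - (1 / 2 : ℝ) ^ 2 ^ i) := by
  rcases lt_or_ge k 3 with hk | hk
  · interval_cases k <;> norm_num [prod_range_succ]
  · exact le_trans (by nlinarith [show (0 : ℝ) < (1 / 2) ^ 2 ^ k by positivity])
      (prod_one_sub_half_pow_two_pow_ge hk)

lemma twelve_hundredths_le {a : ℕ → ℝ} (ha : ∀ i, a i = 1 ∨ a i = -1) (s : ℕ) :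
    0.12 ≤ (∏ i ∈ range s, (1 + rho a i) ^ 2) * (1 - rho a s ^ 2) := by
  have hfac : ∀ i, (1 - (1 / 2 : ℝ) ^ 2 ^ i) ^ 2 ≤ (1 + rho a i) ^ 2 := fun i => by
    have := abs_le.mp (abs_rho_le_half ha i)
    rcases ha i with h | h <;> simp only [rho, h] at this ⊢ <;>
      nlinarith [show (0 : ℝ) < (1 / 2) ^ 2 ^ i by positivity]
  have hlast : (1 - (1 / 2 : ℝ) ^ 2 ^ s) ^ 2 ≤ 1 - rho a s ^ 2 := by
    rw [← sq_abs (rho a s), abs_rho ha]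
    nlinarith [show (0 : ℝ) < (1 / 2) ^ 2 ^ s by positivity, abs_rho_le_half ha s, abs_rho ha s]
  calc (0.12 : ℝ) ≤ (15 / 43) ^ 2 := by norm_num
    _ ≤ (∏ i ∈ range (s + 1), (1 - (1 / 2 : ℝ) ^ 2 ^ i)) ^ 2 :=
        pow_le_pow_left₀ (by norm_num) (fifteen_div_forty_three_le_prod _) 2
    _ = (∏ i ∈ range s, (1 - (1 / 2 : ℝ) ^ 2 ^ i) ^ 2) * (1 - (1 / 2 : ℝ) ^ 2 ^ s) ^ 2 := by
        rw [prod_range_succ, mul_pow, prod_pow]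
    _ ≤ _ := mul_le_mul (prod_le_prod (fun i _ => sq_nonneg _) fun i _ => hfac i) hlast
        (sq_nonneg _) (prod_nonneg fun i _ => sq_nonneg _)

theorem walshCorr_gap {a b : ℕ → ℝ} (ha : ∀ i, a i = 1 ∨ a i = -1)
    (hb : ∀ i, b i = 1 ∨ b i = -1) {m : ℕ} (hab : ∃ i < m, a i ≠ b i) :
    0.12 ≤ |walshCorr a m - walshCorr b m| := by
  classical
  obtain ⟨s, ⟨hsm, hne⟩, hlow⟩ : ∃ s, (s < m ∧ a s ≠ b s) ∧ ∀ i < s, a i = b i :=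
    ⟨Nat.find hab, Nat.find_spec hab, fun i hi => by
      by_contra h
      exact Nat.find_min hab hi ⟨hi.trans (Nat.find_spec hab).1, h⟩⟩
  have hs : b s = -a s := by
    rcases ha s with h | h <;> rcases hb s with h' | h' <;> simp_all
  obtain ⟨J, rfl⟩ : ∃ J, m = s + J + 1 := ⟨m - s - 1, by omega⟩
  exact (twelve_hundredths_le ha _).trans (le_abs_walshCorr_sub ha hb hlow hs J)

end RM1AlphaGap

open RM1AlphaGap in
/-- Condition (C1): separation of the `α` coefficients of distinct `RM(m,1)`
codewords sharing the same first bit. -/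
theorem RM1_alpha_gap (m : ℕ) (x y : Fin (2 ^ m) → Bool)
    (hx : x ∈ RM1 m) (hy : y ∈ RM1 m) (hxy : x ≠ y)
    (hfirst : x ⟨0, by positivity⟩ = y ⟨0, by positivity⟩) :
    0.06 - 3 * ∑ k ∈ Finset.Icc (16 : ℕ) (2 ^ m / 2), (k : ℝ) * ((1:ℝ)/2) ^ k ≤
      |alphaC x - alphaC y| := by
  obtain ⟨a, ha, hxa⟩ := exists_boolSign_eq_walsh hx
  obtain ⟨b, hb, hyb⟩ := exists_boolSign_eq_walsh hy
  have hab : ∃ i < m, a i ≠ b i := by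
    by_contra! h
    refine hxy (funext fun t => boolSign_injective ?_)
    rw [hxa, hyb, hfirst, walsh_congr a h]
  have hdiff : alphaC x - alphaC y = (walshCorr a m - walshCorr b m) / 2 := by
    rw [alphaC_eq_pairSum x _ _ (boolSign_mul_self _) hxa,
      alphaC_eq_pairSum y _ _ (boolSign_mul_self _) hyb, walshCorr, walshCorr]
    ring
  have htail : 0 ≤ ∑ k ∈ Finset.Icc (16 : ℕ) (2 ^ m / 2), (k : ℝ) * ((1:ℝ)/2) ^ k :=
    sum_nonneg fun k _ => by positivity
  rw [hdiff, abs_div, abs_two]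
  linarith [walshCorr_gap ha hb hab]
end

section
/- Let m ≥ 4 and n = 2^m. For any pair of distinct codewords x, y ∈ RM(m,1) having the same first bit (x_1 = y_1), the coefficients satisfy |α_x − α_y| − |β_x − β_y| ≥ 0. -/
open Finset

/-!
In `±1` form the codeword of `u₀ + Σ uₖxₖ` is `(-1)^{u₀} εₜ` with `εₜ = ∏ₖ eₖ^{tₖ}` and
`eₖ = (-1)^{uₖ}`. Then `α_x` and `2ⁿ β_x` are, up to terms independent of `x`, half of the
autocorrelation sum `H_e(w) = Σ_{i<j} εᵢ εⱼ w^{j-i}` at `w = 1/2` and `w = 2`. Splitting off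
the top bit gives `H_{k+1}(w) = 2 H_k(w) + e_k w^{2^k} ∏_{i<k} (2 + eᵢ (w^{2^i} + w^{-2^i}))`,
so, with `X = 2ⁿ`, both `X H_e(1/2) ± H_e(2)` are Horner forms
`Σₖ eₖ v±ₖ ∏_{i<k} (2 + eᵢ Dᵢ)` with the same `Dᵢ = 2^{2^i} + 2^{-2^i}`. Explicit upper and
lower envelopes of their suffixes show that the first sign where `e` and `e'` differ decides
the sign of both differences, so `(X a + b)(X a - b) ≥ 0` for the differences `a`, `b` of
`H(1/2)` and `H(2)`; that is `|b| ≤ X |a|`, which is the claim.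
-/

namespace ReedMuller

noncomputable def horner (v D e : ℕ → ℝ) : ℕ → ℕ → ℝ
  | _, 0 => 0
  | k, j + 1 => e k * v k + (2 + e k * D k) * horner v D e (k + 1) j

section Horner

variable {v D e : ℕ → ℝ}

@[simp] theorem horner_zero (k : ℕ) : horner v D e k 0 = 0 := rfl

theorem horner_succ (k j : ℕ) :
    horner v D e k (j + 1) = e k * v k + (2 + e k * D k) * horner v D e (k + 1) j := rfl

theorem horner_linear_comb (a b : ℝ) (w : ℕ → ℝ) : ∀ j k,
    horner (fun i => a * v i + b * w i) D e k j = a * horner v D e k j + b * horner w D e k j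
  | 0, _ => by simp
  | j + 1, k => by simp only [horner_succ, horner_linear_comb a b w j]; ring

theorem horner_succ_right : ∀ j k, horner v D e k (j + 1) =
    horner v D e k j + e (k + j) * v (k + j) * ∏ i ∈ range j, (2 + e (k + i) * D (k + i))
  | 0, k => by simp [horner_succ]
  | j + 1, k => by
    rw [horner_succ _ (j + 1), horner_succ_right j (k + 1), horner_succ, prod_range_succ']
    simp only [add_assoc, add_comm 1, add_zero]
    ring

end Horner

/-- A certificate that `L k ≤ horner v D e k (m - k) ≤ U k` for every sign sequence `e`;
`separates` then makes the sign at `k` outweigh all later ones. -/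
structure IsHornerEnvelope (v D U L : ℕ → ℝ) (m : ℕ) : Prop where
  lower_nonpos : L m ≤ 0
  upper_nonneg : 0 ≤ U m
  two_le : ∀ k < m, 2 ≤ D k
  upper_of_pos : ∀ k < m, v k + (2 + D k) * U (k + 1) ≤ U k
  upper_of_neg : ∀ k < m, -v k + (2 - D k) * L (k + 1) ≤ U k
  lower_of_pos : ∀ k < m, L k ≤ v k + (2 + D k) * L (k + 1)
  lower_of_neg : ∀ k < m, L k ≤ -v k + (2 - D k) * U (k + 1)
  separates : ∀ k < m, 0 ≤ v k + D k * L (k + 1)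

namespace IsHornerEnvelope

variable {v D U L e e' : ℕ → ℝ} {m : ℕ}

theorem horner_mem_Icc (h : IsHornerEnvelope v D U L m) (he : ∀ k, e k = 1 ∨ e k = -1) :
    ∀ j k, k + j = m → horner v D e k j ∈ Set.Icc (L k) (U k)
  | 0, k, hk => by subst hk; simpa using ⟨h.lower_nonpos, h.upper_nonneg⟩
  | j + 1, k, hk => by
    have hkm : k < m := by omega
    obtain ⟨hlo, hup⟩ := h.horner_mem_Icc he j (k + 1) (by omega)
    have hD := h.two_le k hkm
    rw [horner_succ]
    rcases he k with hek | hek <;> rw [hek] <;> constructor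
    · nlinarith [h.lower_of_pos k hkm]
    · nlinarith [h.upper_of_pos k hkm]
    · nlinarith [h.lower_of_neg k hkm]
    · nlinarith [h.upper_of_neg k hkm]

theorem horner_le_of_neg_of_pos (h : IsHornerEnvelope v D U L m)
    (he : ∀ k, e k = 1 ∨ e k = -1) (he' : ∀ k, e' k = 1 ∨ e' k = -1) {j k : ℕ}
    (hk : k + (j + 1) = m) (hek : e k = 1) (he'k : e' k = -1) :
    horner v D e' k (j + 1) ≤ horner v D e k (j + 1) := by
  have hkm : k < m := by omega
  have hlo := (h.horner_mem_Icc he j (k + 1) (by omega)).1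
  have hlo' := (h.horner_mem_Icc he' j (k + 1) (by omega)).1
  have hD := h.two_le k hkm
  rw [horner_succ, horner_succ, hek, he'k]
  nlinarith [h.separates k hkm]

theorem sub_mul_sub_nonneg {v₁ v₂ U₁ U₂ L₁ L₂ : ℕ → ℝ}
    (h₁ : IsHornerEnvelope v₁ D U₁ L₁ m) (h₂ : IsHornerEnvelope v₂ D U₂ L₂ m)
    (he : ∀ k, e k = 1 ∨ e k = -1) (he' : ∀ k, e' k = 1 ∨ e' k = -1) :
    ∀ j k, k + j = m → 0 ≤ (horner v₁ D e k j - horner v₁ D e' k j) *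
      (horner v₂ D e k j - horner v₂ D e' k j)
  | 0, _, _ => by simp
  | j + 1, k, hk => by
    have same (hsame : e k = e' k) : 0 ≤ (horner v₁ D e k (j + 1) - horner v₁ D e' k (j + 1)) *
        (horner v₂ D e k (j + 1) - horner v₂ D e' k (j + 1)) := by
      have ih := sub_mul_sub_nonneg h₁ h₂ he he' j (k + 1) (by omega)
      simp only [horner_succ, ← hsame]
      calc (0 : ℝ) ≤ (2 + e k * D k) ^ 2 * ((horner v₁ D e (k + 1) j - horner v₁ D e' (k + 1) j) *
            (horner v₂ D e (k + 1) j - horner v₂ D e' (k + 1) j)) := mul_nonneg (sq_nonneg _) ih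
        _ = _ := by ring
    rcases he k with hek | hek <;> rcases he' k with he'k | he'k
    · exact same (hek.trans he'k.symm)
    · exact mul_nonneg (sub_nonneg.2 (h₁.horner_le_of_neg_of_pos he he' hk hek he'k))
        (sub_nonneg.2 (h₂.horner_le_of_neg_of_pos he he' hk hek he'k))
    · exact mul_nonneg_of_nonpos_of_nonpos
        (sub_nonpos.2 (h₁.horner_le_of_neg_of_pos he' he hk he'k hek))
        (sub_nonpos.2 (h₂.horner_le_of_neg_of_pos he' he hk he'k hek))
    · exact same (hek.trans he'k.symm)

end IsHornerEnvelope

/-- For `e k = (-1) ^ u k` this is `(-1) ^ ⟨u, i⟩`, the `±1` form of a linear codeword of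
`RM(m,1)` at position `i`. -/
noncomputable def walsh (e : ℕ → ℝ) (m i : ℕ) : ℝ := ∏ k ∈ range m, if i.testBit k then e k else 1

noncomputable def walshPoly (e : ℕ → ℝ) (m : ℕ) (w : ℝ) : ℝ :=
  ∑ i ∈ range (2 ^ m), walsh e m i * w ^ i

noncomputable def autocorr (e : ℕ → ℝ) (m : ℕ) (W : ℕ → ℝ) : ℝ :=
  ∑ i ∈ range (2 ^ m), ∑ j ∈ range (2 ^ m),
    if i < j then walsh e m i * walsh e m j * W (j - i) else 0

section Walsh

variable {e : ℕ → ℝ} {m i : ℕ}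

theorem walsh_succ_of_lt (hi : i < 2 ^ m) : walsh e (m + 1) i = walsh e m i := by
  simp [walsh, prod_range_succ, Nat.testBit_lt_two_pow hi]

theorem walsh_succ_two_pow_add (hi : i < 2 ^ m) :
    walsh e (m + 1) (2 ^ m + i) = e m * walsh e m i := by
  rw [walsh, prod_range_succ, Nat.testBit_two_pow_add_eq, Nat.testBit_lt_two_pow hi, walsh,
    mul_comm]
  congr 1
  refine prod_congr rfl fun k hk => ?_
  rw [Nat.testBit_two_pow_add_gt (mem_range.mp hk)]

theorem walshPoly_succ (w : ℝ) :
    walshPoly e (m + 1) w = (1 + e m * w ^ 2 ^ m) * walshPoly e m w := by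
  rw [walshPoly, pow_succ, mul_two, sum_range_add, add_mul, one_mul, walshPoly, mul_sum]
  congr 1
  · exact sum_congr rfl fun i hi => by rw [walsh_succ_of_lt (mem_range.mp hi)]
  · refine sum_congr rfl fun i hi => ?_
    rw [walsh_succ_two_pow_add (mem_range.mp hi), pow_add]
    ring

theorem walshPoly_mul_walshPoly_inv (he : ∀ k, e k = 1 ∨ e k = -1) {w : ℝ} (hw : w ≠ 0) :
    ∀ m, walshPoly e m w * walshPoly e m w⁻¹ =
      ∏ k ∈ range m, (2 + e k * (w ^ 2 ^ k + w⁻¹ ^ 2 ^ k))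
  | 0 => by simp [walshPoly, walsh]
  | m + 1 => by
    have hee : e m * e m = 1 := mul_self_eq_one_iff.mpr (he m)
    have hww : w ^ 2 ^ m * w⁻¹ ^ 2 ^ m = 1 := by rw [← mul_pow, mul_inv_cancel₀ hw, one_pow]
    rw [walshPoly_succ, walshPoly_succ, prod_range_succ, ← walshPoly_mul_walshPoly_inv he hw m]
    linear_combination (walshPoly e m w * walshPoly e m w⁻¹) *
      (hee + e m * e m * hww)

end Walsh

theorem sum_range_add_self_sq {M : Type*} [AddCommMonoid M] (f : ℕ → ℕ → M) (N : ℕ) :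
    ∑ i ∈ range (N + N), ∑ j ∈ range (N + N), f i j =
      ∑ i ∈ range N, ∑ j ∈ range N, (f i j + f i (N + j) + f (N + i) j + f (N + i) (N + j)) := by
  simp only [sum_range_add, sum_add_distrib]
  abel

section Autocorr

variable {e : ℕ → ℝ} {m : ℕ}

theorem autocorr_succ (he : ∀ k, e k = 1 ∨ e k = -1) {w : ℝ} (hw : w ≠ 0) :
    autocorr e (m + 1) (w ^ ·) = 2 * autocorr e m (w ^ ·) +
      e m * w ^ 2 ^ m * (walshPoly e m w⁻¹ * walshPoly e m w) := by
  have hee : e m * e m = 1 := mul_self_eq_one_iff.mpr (he m)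
  rw [autocorr, pow_succ, mul_two, sum_range_add_self_sq, autocorr, mul_sum, walshPoly,
    walshPoly, sum_mul_sum, mul_sum, ← sum_add_distrib]
  refine sum_congr rfl fun i hi => ?_
  rw [mul_sum, mul_sum, ← sum_add_distrib]
  refine sum_congr rfl fun j hj => ?_
  have hi := mem_range.mp hi
  have hj := mem_range.mp hj
  simp only [walsh_succ_of_lt hi, walsh_succ_of_lt hj, walsh_succ_two_pow_add hi,
    walsh_succ_two_pow_add hj, add_lt_add_iff_left, Nat.add_sub_add_left,
    if_pos (show i < 2 ^ m + j by omega), if_neg (show ¬ 2 ^ m + i < j by omega)]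
  rw [pow_sub₀ w hw (by omega : i ≤ 2 ^ m + j), pow_add, inv_pow]
  split_ifs
  · linear_combination (walsh e m i * walsh e m j * w ^ (j - i)) * hee
  · ring

theorem autocorr_eq_horner (he : ∀ k, e k = 1 ∨ e k = -1) {w : ℝ} (hw : w ≠ 0) :
    ∀ m, autocorr e m (w ^ ·) = 2 ^ m *
      horner (fun k => w ^ 2 ^ k / 2 ^ (k + 1)) (fun k => w ^ 2 ^ k + w⁻¹ ^ 2 ^ k) e 0 m
  | 0 => by simp [autocorr]
  | m + 1 => by
    rw [autocorr_succ he hw, mul_comm (walshPoly e m w⁻¹), walshPoly_mul_walshPoly_inv he hw,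
      autocorr_eq_horner he hw m, horner_succ_right]
    simp only [zero_add]
    field_simp
    ring

end Autocorr

noncomputable def twoPowTwoPow (k : ℕ) : ℝ := 2 ^ 2 ^ k

noncomputable def twoPowTwoPowAddInv (k : ℕ) : ℝ := twoPowTwoPow k + (twoPowTwoPow k)⁻¹

noncomputable def scale (m k : ℕ) : ℝ := 2 ^ m / 2 ^ k

noncomputable def hornerWeight (s : ℝ) (m k : ℕ) : ℝ :=
  scale m k / 2 * (twoPowTwoPow m / twoPowTwoPow k + s * twoPowTwoPow k)

section Envelopes

local notation "x" => twoPowTwoPow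

theorem two_le_twoPowTwoPow (k : ℕ) : 2 ≤ x k :=
  le_self_pow₀ one_le_two (pow_ne_zero k two_ne_zero)

theorem twoPowTwoPow_succ (k : ℕ) : x (k + 1) = x k ^ 2 := by
  rw [twoPowTwoPow, twoPowTwoPow, ← pow_mul, pow_succ]

theorem twoPowTwoPow_sq_le {k m : ℕ} (h : k < m) : x k ^ 2 ≤ x m := by
  rw [← twoPowTwoPow_succ]
  exact pow_le_pow_right₀ one_le_two (Nat.pow_le_pow_right two_pos h)

theorem two_le_twoPowTwoPowAddInv (k : ℕ) : 2 ≤ twoPowTwoPowAddInv k := by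
  have := two_le_twoPowTwoPow k
  rw [twoPowTwoPowAddInv]
  linarith [inv_pos.mpr (show 0 < x k by linarith)]

theorem scale_succ (m k : ℕ) : scale m (k + 1) = scale m k / 2 := by
  rw [scale, scale, pow_succ, div_mul_eq_div_div]

theorem scale_self (m : ℕ) : scale m m = 1 := div_self (by positivity)

theorem two_pow_le_scale {m k j : ℕ} (h : k + j ≤ m) : 2 ^ j ≤ scale m k := by
  rw [scale, le_div_iff₀ (by positivity), ← pow_add, add_comm]
  exact pow_le_pow_right₀ one_le_two h

/-- `upperPlus m k` is the suffix Horner form of `hornerWeight 1 m` at the constant sign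
sequence `1`, and `lowerPlus m k` at the sequence that is `-1` at `k` and `1` afterwards. -/
noncomputable def upperPlus (m k : ℕ) : ℝ := scale m k * (x m - x k) / (x k - 1)

noncomputable def lowerPlus (m k : ℕ) : ℝ := -(scale m k * (x m + x k) / (x k + 1))

theorem isHornerEnvelope_plus (m : ℕ) :
    IsHornerEnvelope (hornerWeight 1 m) twoPowTwoPowAddInv (upperPlus m) (lowerPlus m) m := by
  have hx := two_le_twoPowTwoPow
  refine ⟨?_, ?_, fun k _ => two_le_twoPowTwoPowAddInv k, fun k hk => ?_, fun k hk => ?_,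
    fun k hk => ?_, fun k hk => ?_, fun k hk => ?_⟩
  · have := hx m
    rw [lowerPlus, neg_nonpos, scale_self]
    positivity
  · simp [upperPlus]
  all_goals
    have hxk := hx k
    have hX := twoPowTwoPow_sq_le hk
    have hK : 2 ≤ scale m k := (pow_one (2 : ℝ)).symm.trans_le (two_pow_le_scale hk)
    simp only [hornerWeight, upperPlus, lowerPlus, twoPowTwoPowAddInv, scale_succ,
      twoPowTwoPow_succ]
    generalize x k = a at *
    generalize x m = X at *
    generalize scale m k = K at *
    have : 0 < a - 1 := by linarith
    have : 0 < a ^ 2 - 1 := by nlinarith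
    have : 0 < a + 1 := by linarith
    have : 0 < a ^ 2 + 1 := by nlinarith
  · apply le_of_eq
    field_simp
    ring
  · calc _ = -(K * (X + a ^ 2) / (a ^ 2 + 1)) := by field_simp; ring
      _ ≤ 0 := neg_nonpos.mpr (div_nonneg (mul_nonneg (by linarith) (by nlinarith)) (by linarith))
      _ ≤ _ := div_nonneg (mul_nonneg (by linarith) (by nlinarith)) (by linarith)
  · calc _ ≤ -(K * (X + a ^ 2) / (a ^ 2 + 1)) := by
          rw [neg_le_neg_iff, div_le_div_iff₀ (by positivity) (by positivity)]
          nlinarith [mul_nonneg (mul_nonneg (mul_nonneg (by positivity : (0:ℝ) ≤ K)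
            (by positivity : (0:ℝ) ≤ a)) (by positivity : (0:ℝ) ≤ a - 1))
            (by nlinarith : (0:ℝ) ≤ X - 1)]
      _ = _ := by field_simp; ring
  · apply le_of_eq
    field_simp
    ring
  · apply le_of_eq
    field_simp
    ring

/-- The same extremal values for `hornerWeight (-1) m`. Since that weight vanishes at
`k = m - 1`, the lower bound at `k = m` must be `0`, which the closed formula is not. -/
noncomputable def upperMinus (m k : ℕ) : ℝ :=
  (scale m k * (x k - 1) * (x m + x k) - 2 * x k * (x m - 1)) / (x k - 1) ^ 2

noncomputable def lowerMinus (m k : ℕ) : ℝ :=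
  if k = m then 0 else
    -((scale m k * (x k + 1) * (x m - x k) - 2 * x k * (x m - 1)) / (x k + 1) ^ 2)

theorem scale_succ_self (k : ℕ) : scale (k + 1) k = 2 := by
  rw [scale, pow_succ]
  field_simp

theorem upperMinus_self (m : ℕ) : upperMinus m m = 0 := by
  rw [upperMinus, scale_self]
  ring

theorem lowerMinus_self (m : ℕ) : lowerMinus m m = 0 := if_pos rfl

theorem hornerWeight_neg_one_succ_self (k : ℕ) : hornerWeight (-1) (k + 1) k = 0 := by
  have := two_le_twoPowTwoPow k
  rw [hornerWeight, scale_succ_self, twoPowTwoPow_succ]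
  field_simp
  ring

theorem upperMinus_succ_self (k : ℕ) : upperMinus (k + 1) k = 0 := by
  rw [upperMinus, scale_succ_self, twoPowTwoPow_succ]
  ring

theorem lowerMinus_succ_self (k : ℕ) : lowerMinus (k + 1) k = 0 := by
  rw [lowerMinus, if_neg (by omega), scale_succ_self, twoPowTwoPow_succ]
  ring

theorem isHornerEnvelope_minus (m : ℕ) :
    IsHornerEnvelope (hornerWeight (-1) m) twoPowTwoPowAddInv (upperMinus m) (lowerMinus m) m := by
  refine ⟨(lowerMinus_self m).le, (upperMinus_self m).ge, fun k _ => two_le_twoPowTwoPowAddInv k,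
    fun k hk => ?_, fun k hk => ?_, fun k hk => ?_, fun k hk => ?_, fun k hk => ?_⟩
  all_goals
    rcases (show k + 1 = m ∨ k + 2 ≤ m by omega) with rfl | hk2
    · simp [hornerWeight_neg_one_succ_self, upperMinus_succ_self, lowerMinus_succ_self,
        upperMinus_self, lowerMinus_self]
    have hxk := two_le_twoPowTwoPow k
    have hX := twoPowTwoPow_sq_le hk
    have hK : 4 ≤ scale m k := le_trans (by norm_num) (two_pow_le_scale hk2)
    simp only [hornerWeight, upperMinus, lowerMinus, twoPowTwoPowAddInv, scale_succ,
      twoPowTwoPow_succ, if_neg (show k ≠ m by omega), if_neg (show k + 1 ≠ m by omega)]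
    generalize x k = a at *
    generalize x m = X at *
    generalize scale m k = K at *
    have : 0 < a - 1 := by linarith
    have : 0 < a ^ 2 - 1 := by nlinarith
    have : 0 < a + 1 := by linarith
    have : 0 < a ^ 2 + 1 := by nlinarith
  · apply le_of_eq
    field_simp
    ring
  · calc _ = -((K * (X - a ^ 2) * (a ^ 2 + 1) + 2 * a * (a - 1) ^ 2 * (X - 1)) /
            (a ^ 2 + 1) ^ 2) := by field_simp; ring
      _ ≤ 0 := by
          refine neg_nonpos.mpr (div_nonneg (add_nonneg ?_ ?_) (by positivity))
          · exact mul_nonneg (mul_nonneg (by linarith) (by linarith)) (by linarith)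
          · exact mul_nonneg (by positivity) (by nlinarith)
      _ ≤ _ := by
          refine div_nonneg ?_ (by positivity)
          nlinarith [mul_nonneg (sub_nonneg.mpr hK) (mul_nonneg (by linarith : (0:ℝ) ≤ a - 1)
            (by nlinarith : (0:ℝ) ≤ X + a))]
  · rw [← sub_nonneg]
    calc (0 : ℝ) ≤ (2 * K * a ^ 3 * (X + 1) * (a ^ 4 - 1) + 16 * a ^ 4 * (X - 1) * (a ^ 2 + a + 1))
          / (2 * a ^ 2 * (a + 1) ^ 2 * (a ^ 2 + 1) ^ 2) := by
          refine div_nonneg (add_nonneg ?_ ?_) (by positivity)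
          · have : (0 : ℝ) < a ^ 4 - 1 := by nlinarith
            have : (0 : ℝ) < X + 1 := by nlinarith
            positivity
          · exact mul_nonneg (mul_nonneg (by positivity) (by nlinarith)) (by positivity)
      _ = _ := by field_simp; ring
  · apply le_of_eq
    field_simp
    ring
  · calc (0 : ℝ) ≤ 2 * a * (X - 1) / (a ^ 2 + 1) :=
          div_nonneg (mul_nonneg (by positivity) (by nlinarith)) (by positivity)
      _ = _ := by field_simp; ring

end Envelopes

theorem autocorr_combination {e : ℕ → ℝ} (he : ∀ k, e k = 1 ∨ e k = -1) (s : ℝ) (m : ℕ) :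
    twoPowTwoPow m * autocorr e m (2⁻¹ ^ ·) + s * autocorr e m (2 ^ ·) =
      horner (hornerWeight s m) twoPowTwoPowAddInv e 0 m := by
  have hD : ∀ w : ℝ, (w = 2 ∨ w = 2⁻¹) →
      (fun k => w ^ 2 ^ k + w⁻¹ ^ 2 ^ k) = twoPowTwoPowAddInv := by
    rintro w (rfl | rfl) <;> funext k <;>
      simp only [twoPowTwoPowAddInv, twoPowTwoPow, inv_inv, inv_pow, add_comm]
  rw [autocorr_eq_horner he (by norm_num), autocorr_eq_horner he two_ne_zero,
    hD _ (.inr rfl), hD _ (.inl rfl), ← mul_assoc, ← mul_assoc, ← horner_linear_comb]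
  congr 1
  funext k
  simp only [hornerWeight, scale, twoPowTwoPow, inv_pow]
  field_simp
  ring

theorem abs_autocorr_two_sub_le {e e' : ℕ → ℝ} (he : ∀ k, e k = 1 ∨ e k = -1)
    (he' : ∀ k, e' k = 1 ∨ e' k = -1) (m : ℕ) :
    |autocorr e m (2 ^ ·) - autocorr e' m (2 ^ ·)| ≤
      twoPowTwoPow m * |autocorr e m (2⁻¹ ^ ·) - autocorr e' m (2⁻¹ ^ ·)| := by
  set a := autocorr e m (2⁻¹ ^ ·) - autocorr e' m (2⁻¹ ^ ·)
  set b := autocorr e m (2 ^ ·) - autocorr e' m (2 ^ ·)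
  have hX : 0 < twoPowTwoPow m := two_pos.trans_le (two_le_twoPowTwoPow m)
  have key : 0 ≤ (twoPowTwoPow m * a + b) * (twoPowTwoPow m * a - b) := by
    have h := (isHornerEnvelope_plus m).sub_mul_sub_nonneg (isHornerEnvelope_minus m) he he' m 0
      (zero_add m)
    simp only [← autocorr_combination he, ← autocorr_combination he'] at h
    convert h using 1
    ring
  have hsq : |b| ≤ |twoPowTwoPow m * a| := sq_le_sq.mp (by nlinarith)
  rwa [abs_mul, abs_of_pos hX] at hsq

def boolSign (b : Bool) : ℝ := if b then -1 else 1

noncomputable def sameBitPairSum {n : ℕ} (x : Fin n → Bool) (W : ℕ → ℝ) : ℝ :=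
  (∑ i ∈ univ.filter (fun i : Fin n => x i = false),
     ∑ j ∈ univ.filter (fun j : Fin n => x j = false ∧ i < j), W (j - i))
  + ∑ i ∈ univ.filter (fun i : Fin n => x i = true),
      ∑ j ∈ univ.filter (fun j : Fin n => x j = true ∧ i < j), W (j - i)

theorem sameBitPairSum_eq {n : ℕ} (x : Fin n → Bool) (W : ℕ → ℝ) :
    sameBitPairSum x W = ∑ i : Fin n, ∑ j : Fin n,
      if i < j then (1 + boolSign (x i) * boolSign (x j)) / 2 * W (j - i) else 0 := by
  simp only [sameBitPairSum, sum_filter, ← sum_add_distrib]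
  refine sum_congr rfl fun i _ => ?_
  rcases Bool.eq_false_or_eq_true (x i) with hi | hi <;>
    simp only [hi, if_true, if_false, Bool.true_eq_false, Bool.false_eq_true, add_zero,
      zero_add] <;>
    refine sum_congr rfl fun j _ => ?_ <;>
    rcases Bool.eq_false_or_eq_true (x j) with hj | hj <;>
    simp [hj, boolSign]

theorem alphaC_eq_sameBitPairSum {n : ℕ} (x : Fin n → Bool) :
    alphaC x = sameBitPairSum x ((1 / 2) ^ ·) := rfl

theorem betaC_eq_sameBitPairSum {n : ℕ} (x : Fin n → Bool) :
    betaC x = sameBitPairSum x (fun d => (1 / 2) ^ (n - d)) := rfl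

theorem sameBitPairSum_sub {m : ℕ} {x y : Fin (2 ^ m) → Bool} {e e' : ℕ → ℝ}
    (hx : ∀ i j : Fin (2 ^ m), boolSign (x i) * boolSign (x j) = walsh e m i * walsh e m j)
    (hy : ∀ i j : Fin (2 ^ m), boolSign (y i) * boolSign (y j) = walsh e' m i * walsh e' m j)
    (W : ℕ → ℝ) :
    sameBitPairSum x W - sameBitPairSum y W = (autocorr e m W - autocorr e' m W) / 2 := by
  simp only [sameBitPairSum_eq, autocorr, Finset.sum_range, ← sum_sub_distrib, sum_div]
  refine sum_congr rfl fun i _ => sum_congr rfl fun j _ => ?_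
  simp only [Fin.lt_def]
  split_ifs
  · rw [hx, hy]
    ring
  · simp

theorem autocorr_half_pow_sub {e : ℕ → ℝ} (m : ℕ) :
    autocorr e m (fun d => (1 / 2) ^ (2 ^ m - d)) = 2⁻¹ ^ 2 ^ m * autocorr e m (2 ^ ·) := by
  simp only [autocorr, mul_sum]
  refine sum_congr rfl fun i _ => sum_congr rfl fun j hj => ?_
  split_ifs with hij
  · rw [one_div, inv_pow, inv_pow, pow_sub₀ _ two_ne_zero (by simp at hj; omega)]
    field_simp
  · simp

theorem boolSign_xor (a b : Bool) : boolSign (a ^^ b) = boolSign a * boolSign b := by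
  cases a <;> cases b <;> simp [boolSign]

theorem boolSign_decide_mod_two_eq_one (c : ℕ) : boolSign (decide (c % 2 = 1)) = (-1) ^ c := by
  rw [neg_one_pow_eq_pow_mod_two]
  rcases Nat.mod_two_eq_zero_or_one c with h | h <;> simp [h, boolSign]

theorem exists_walsh_of_mem_RM1 {m : ℕ} {x : Fin (2 ^ m) → Bool} (hx : x ∈ RM1 m) :
    ∃ e : ℕ → ℝ, (∀ k, e k = 1 ∨ e k = -1) ∧
      ∀ i j : Fin (2 ^ m), boolSign (x i) * boolSign (x j) = walsh e m i * walsh e m j := by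
  obtain ⟨u0, u, hu⟩ := hx
  let e : ℕ → ℝ := fun k => if h : k < m then boolSign (u ⟨k, h⟩) else 1
  have sign_eq (t : Fin (2 ^ m)) : boolSign (x t) = boolSign u0 * walsh e m t := by
    rw [hu t, boolSign_xor, boolSign_decide_mod_two_eq_one, walsh, ← Fin.prod_univ_eq_prod_range,
      ← prod_const, prod_filter]
    congr 1
    refine prod_congr rfl fun k _ => ?_
    simp only [e, dif_pos k.isLt]
    cases u k <;> cases (t : ℕ).testBit k <;> simp [boolSign]
  refine ⟨e, fun k => ?_, fun i j => ?_⟩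
  · unfold e boolSign
    split_ifs <;> simp
  · rw [sign_eq, sign_eq]
    have : boolSign u0 * boolSign u0 = 1 := by cases u0 <;> simp [boolSign]
    linear_combination walsh e m i * walsh e m j * this

end ReedMuller

open ReedMuller

/-- Condition (C2): for distinct `RM(m,1)` codewords sharing the same first bit,
`|α_x - α_y| - |β_x - β_y| ≥ 0`. -/
theorem RM1_alpha_beta_gap (m : ℕ) (x y : Fin (2 ^ m) → Bool)
    (hx : x ∈ RM1 m) (hy : y ∈ RM1 m) :
    0 ≤ |alphaC x - alphaC y| - |betaC x - betaC y| := by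
  obtain ⟨e, he, hxe⟩ := exists_walsh_of_mem_RM1 hx
  obtain ⟨e', he', hye⟩ := exists_walsh_of_mem_RM1 hy
  have hα : alphaC x - alphaC y = (autocorr e m (2⁻¹ ^ ·) - autocorr e' m (2⁻¹ ^ ·)) / 2 := by
    rw [alphaC_eq_sameBitPairSum, alphaC_eq_sameBitPairSum, sameBitPairSum_sub hxe hye]
    simp only [one_div]
  have hβ : betaC x - betaC y =
      2⁻¹ ^ 2 ^ m * (autocorr e m (2 ^ ·) - autocorr e' m (2 ^ ·)) / 2 := by
    rw [betaC_eq_sameBitPairSum, betaC_eq_sameBitPairSum, sameBitPairSum_sub hxe hye,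
      autocorr_half_pow_sub, autocorr_half_pow_sub, mul_sub]
  have hX : 2⁻¹ ^ 2 ^ m * twoPowTwoPow m = 1 := by
    rw [twoPowTwoPow, ← mul_pow, inv_mul_cancel₀ two_ne_zero, one_pow]
  have key := abs_autocorr_two_sub_le he he' m
  refine sub_nonneg.mpr ?_
  calc |betaC x - betaC y| = 2⁻¹ ^ 2 ^ m * |autocorr e m (2 ^ ·) - autocorr e' m (2 ^ ·)| / 2 := by
        rw [hβ, abs_div, abs_mul, abs_two, abs_of_pos (by positivity)]
    _ ≤ 2⁻¹ ^ 2 ^ m *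
          (twoPowTwoPow m * |autocorr e m (2⁻¹ ^ ·) - autocorr e' m (2⁻¹ ^ ·)|) / 2 := by gcongr
    _ = |alphaC x - alphaC y| := by rw [hα, ← mul_assoc, hX, one_mul, abs_div, abs_two]
end

section
/- Let m ≥ 4 and n = 2^m. For any codeword x ∈ RM(m,1), the coefficients satisfy |β_x − γ_x| ≥ 0.06 − 3·Σ_{k=16}^{n/2} k·(1/2)^k. -/
open Finset

/-! Write `s_i = (-1)^{x_i}`. Then `β_x - γ_x = ∑_{d=1}^{n-1} 2^{-(n-d)} A_x(d)`, where
`A_x(d) = ∑_i s_i s_{i+d}` is the aperiodic autocorrelation of `s`.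
A codeword of `RM(m+1,1)` is `(y, y ⊕ c)` with `y ∈ RM(m,1)`. Writing `n = 2^m`, the lags
`d = n + e > n` only pair the first half with the second one, so together they give
`±(β_y - γ_y)`; the lags `d ≤ n` carry weight at most `2^{-n}` each and contribute at most
`4n·2^{-n}`. These errors are summable and far smaller than the margin left at `m = 4`, where
the bound is checked by computation over the 32 codewords of `RM(4,1)`. -/

def spin (a b : Bool) : ℤ := if a = b then 1 else -1

lemma spin_xor_right (a b c : Bool) : spin a (c ^^ b) = (if c then -1 else 1) * spin a b := by
  cases a <;> cases b <;> cases c <;> rfl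

lemma abs_spin (a b : Bool) : |spin a b| = 1 := by
  cases a <;> cases b <;> rfl

def autocorr (f : ℕ → Bool) (n d : ℕ) : ℤ :=
  ∑ i ∈ range (n - d), spin (f i) (f (i + d))

lemma abs_autocorr_le (f : ℕ → Bool) (n d : ℕ) : |autocorr f n d| ≤ n :=
  calc |autocorr f n d| ≤ ∑ i ∈ range (n - d), |spin (f i) (f (i + d))| :=
        abs_sum_le_sum_abs _ _
    _ ≤ n := by simp [abs_spin]

noncomputable def weightedAutocorr (f : ℕ → Bool) (n : ℕ) : ℝ :=
  ∑ d ∈ Ico 1 n, (1 / 2 : ℝ) ^ (n - d) * autocorr f n d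

lemma two_pow_mul_weightedAutocorr (f : ℕ → Bool) (n : ℕ) :
    (2 : ℝ) ^ n * weightedAutocorr f n =
      ((∑ d ∈ Ico 1 n, 2 ^ d * autocorr f n d : ℤ) : ℝ) := by
  rw [weightedAutocorr, mul_sum]
  push_cast
  refine sum_congr rfl fun d hd => ?_
  obtain ⟨k, rfl⟩ : ∃ k, n = d + k := ⟨n - d, by simp at hd; omega⟩
  rw [Nat.add_sub_cancel_left, pow_add, ← mul_assoc, mul_assoc _ _ ((1 / 2 : ℝ) ^ k),
    ← mul_pow]
  norm_num

lemma betaC_sub_gammaC_eq_sum_pairs {n : ℕ} (x : Fin n → Bool) :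
    betaC x - gammaC x = ∑ i : Fin n, ∑ j : Fin n,
      if i < j then (1 / 2 : ℝ) ^ (n - ((j : ℕ) - i)) * spin (x i) (x j) else 0 := by
  unfold betaC gammaC
  simp only [sum_filter]
  rw [← sum_add_distrib, ← sum_add_distrib, ← sum_sub_distrib]
  refine sum_congr rfl fun i _ => ?_
  cases hi : x i <;>
    simp only [↓reduceIte, Bool.false_eq_true, Bool.true_eq_false, add_zero, zero_add,
      ← sum_sub_distrib] <;>
    refine sum_congr rfl fun j _ => ?_ <;>
    cases x j <;> split_ifs <;> simp_all [spin]

lemma sum_pairs_eq_weightedAutocorr (f : ℕ → Bool) (n : ℕ) :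
    ∑ i ∈ range n, ∑ j ∈ range n,
      (if i < j then (1 / 2 : ℝ) ^ (n - (j - i)) * spin (f i) (f j) else 0) =
      weightedAutocorr f n := by
  rw [weightedAutocorr, ← sum_product', ← sum_filter]
  simp only [autocorr, Int.cast_sum, mul_sum]
  rw [sum_sigma']
  refine sum_nbij' (fun p => ⟨p.2 - p.1, p.1⟩) (fun q => (q.2, q.2 + q.1)) ?_ ?_ ?_ ?_ ?_
  all_goals simp only [mem_filter, mem_product, mem_range, mem_sigma, mem_Ico, Prod.forall,
    Sigma.forall]
  · intro i j h
    omega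
  · intro d i h
    omega
  · intro i j h
    rw [Nat.add_sub_cancel' h.2.le]
  · intro d i _
    rw [Nat.add_sub_cancel_left]
  · intro i j h
    rw [Nat.add_sub_cancel' h.2.le]

theorem betaC_sub_gammaC_eq_weightedAutocorr {n : ℕ} (x : Fin n → Bool) (f : ℕ → Bool)
    (hf : ∀ i : Fin n, x i = f i) : betaC x - gammaC x = weightedAutocorr f n := by
  rw [betaC_sub_gammaC_eq_sum_pairs, ← sum_pairs_eq_weightedAutocorr]
  simp only [hf, Fin.lt_def, ← Fin.sum_univ_eq_sum_range]

lemma autocorr_add_of_eq_xor {f g : ℕ → Bool} {n : ℕ} {c : Bool}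
    (hlo : ∀ i < n, f i = g i) (hhi : ∀ i < n, f (i + n) = (c ^^ g i)) (e : ℕ) :
    autocorr f (n + n) (e + n) = (if c then -1 else 1) * autocorr g n e := by
  rw [autocorr, autocorr, show n + n - (e + n) = n - e by omega, mul_sum]
  refine sum_congr rfl fun i hi => ?_
  have hi : i < n - e := mem_range.1 hi
  rw [← add_assoc, hlo i (by omega), hhi (i + e) (by omega), spin_xor_right]

lemma sum_Ico_half_pow_le (n : ℕ) :
    ∑ d ∈ Ico 1 (n + 1), (1 / 2 : ℝ) ^ (n + n - d) ≤ 2 * (1 / 2) ^ n :=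
  calc ∑ d ∈ Ico 1 (n + 1), (1 / 2 : ℝ) ^ (n + n - d)
      = (1 / 2) ^ n * ∑ k ∈ range n, (1 / 2 : ℝ) ^ (n - 1 - k) := by
        rw [sum_Ico_eq_sum_range, Nat.add_sub_cancel, mul_sum]
        refine sum_congr rfl fun k hk => ?_
        rw [← pow_add]
        congr 1
        have := mem_range.1 hk
        omega
    _ = (1 / 2) ^ n * ∑ k ∈ range n, (1 / 2 : ℝ) ^ k := by
        rw [sum_range_reflect (fun k => (1 / 2 : ℝ) ^ k)]
    _ ≤ (1 / 2) ^ n * 2 := by gcongr; exact sum_geometric_two_le n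
    _ = 2 * (1 / 2) ^ n := mul_comm _ _

lemma abs_sum_short_lags_le (f : ℕ → Bool) (n : ℕ) :
    |∑ d ∈ Ico 1 (n + 1), (1 / 2 : ℝ) ^ (n + n - d) * autocorr f (n + n) d| ≤
      4 * n * (1 / 2) ^ n :=
  calc _ ≤ ∑ d ∈ Ico 1 (n + 1), (1 / 2 : ℝ) ^ (n + n - d) * ((n + n : ℕ) : ℝ) := by
        refine (abs_sum_le_sum_abs _ _).trans (sum_le_sum fun d _ => ?_)
        rw [abs_mul, abs_of_pos (by positivity), ← Int.cast_abs]
        gcongr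
        exact_mod_cast abs_autocorr_le f (n + n) d
    _ = 2 * n * ∑ d ∈ Ico 1 (n + 1), (1 / 2 : ℝ) ^ (n + n - d) := by
        rw [← sum_mul]
        push_cast
        ring
    _ ≤ 2 * n * (2 * (1 / 2) ^ n) := by gcongr; exact sum_Ico_half_pow_le n
    _ = 4 * n * (1 / 2) ^ n := by ring

theorem abs_weightedAutocorr_double_ge {f g : ℕ → Bool} {n : ℕ} {c : Bool}
    (hlo : ∀ i < n, f i = g i) (hhi : ∀ i < n, f (i + n) = (c ^^ g i)) :
    |weightedAutocorr g n| - 4 * n * (1 / 2) ^ n ≤ |weightedAutocorr f (n + n)| := by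
  rcases Nat.eq_zero_or_pos n with rfl | hn
  · simp [weightedAutocorr]
  set σ : ℝ := if c then -1 else 1
  set short := ∑ d ∈ Ico 1 (n + 1), (1 / 2 : ℝ) ^ (n + n - d) * autocorr f (n + n) d
  have hsplit : weightedAutocorr f (n + n) = short + σ * weightedAutocorr g n := by
    rw [weightedAutocorr,
      ← sum_Ico_consecutive _ (by omega : 1 ≤ 1 + n) (by omega : 1 + n ≤ n + n), ← sum_Ico_add',
      add_comm 1 n, weightedAutocorr, mul_sum]
    congr 1
    refine sum_congr rfl fun e _ => ?_
    rw [autocorr_add_of_eq_xor hlo hhi, show n + n - (e + n) = n - e by omega]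
    push_cast
    ring
  have hσ : |σ| = 1 := by unfold σ; split <;> simp
  have hshort := abs_sum_short_lags_le f n
  have htri := abs_sub_abs_le_abs_sub (σ * weightedAutocorr g n) (-short)
  rw [abs_neg, sub_neg_eq_add, add_comm, abs_mul, hσ, one_mul] at htri
  rw [hsplit]
  linarith

def rmEval {m : ℕ} (u0 : Bool) (u : Fin m → Bool) (t : ℕ) : Bool :=
  u0 ^^ decide ((univ.filter fun i : Fin m => u i = true ∧ t.testBit i = true).card % 2 = 1)

lemma rmEval_mod_two_pow {m : ℕ} (u0 : Bool) (u : Fin m → Bool) (t : ℕ) :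
    rmEval u0 u (t % 2 ^ m) = rmEval u0 u t := by
  simp [rmEval, Nat.testBit_mod_two_pow]

lemma rmEval_succ {m : ℕ} (u0 : Bool) (u : Fin (m + 1) → Bool) (t : ℕ) :
    rmEval u0 u t = (rmEval u0 (Fin.init u) t ^^ (u (Fin.last m) && t.testBit m)) := by
  unfold rmEval
  rw [card_filter, Fin.sum_univ_castSucc, ← card_filter]
  simp only [Fin.init, Fin.val_castSucc, Fin.val_last]
  rcases Bool.eq_false_or_eq_true (u (Fin.last m)) with hu | hu <;>
    rcases Bool.eq_false_or_eq_true (t.testBit m) with hb | hb <;>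
    simp [hu, hb, ← Nat.odd_iff, Nat.odd_add_one, -Nat.not_odd_iff_even] <;> rfl

lemma rmEval_of_lt {m : ℕ} (u0 : Bool) (u : Fin (m + 1) → Bool) {t : ℕ} (ht : t < 2 ^ m) :
    rmEval u0 u t = rmEval u0 (Fin.init u) t := by
  rw [rmEval_succ, Nat.testBit_lt_two_pow ht, Bool.and_false, Bool.xor_false]

lemma rmEval_add_two_pow {m : ℕ} (u0 : Bool) (u : Fin (m + 1) → Bool) {t : ℕ}
    (ht : t < 2 ^ m) :
    rmEval u0 u (t + 2 ^ m) = (u (Fin.last m) ^^ rmEval u0 (Fin.init u) t) := by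
  have hlow := rmEval_mod_two_pow u0 (Fin.init u) (t + 2 ^ m)
  rw [Nat.add_mod_right, Nat.mod_eq_of_lt ht] at hlow
  rw [rmEval_succ, ← hlow, Nat.add_comm t, Nat.testBit_two_pow_add_eq, Nat.testBit_lt_two_pow ht,
    Bool.not_false, Bool.and_true, Bool.xor_comm]

lemma abs_autocorr_rmEval_four_ge : ∀ (u0 : Bool) (u : Fin 4 → Bool),
    4006 ≤ |∑ d ∈ Ico 1 16, 2 ^ d * autocorr (rmEval u0 u) 16 d| := by
  decide

/-- The term `9/2 · n · 2^{-n}` (with `n = 2^m`) pays for all later doubling steps: since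
`2^{-n} ≤ 1/18`, it exceeds the error `4n · 2^{-n}` of the step by at least
`9/2 · 2n · 2^{-2n}`. -/
theorem abs_weightedAutocorr_rmEval_ge (m : ℕ) (hm : 4 ≤ m) (u0 : Bool) (u : Fin m → Bool) :
    0.06 + 9 / 2 * 2 ^ m * (1 / 2 : ℝ) ^ 2 ^ m ≤ |weightedAutocorr (rmEval u0 u) (2 ^ m)| := by
  induction m, hm using Nat.le_induction with
  | base =>
    have hcomp : (4006 : ℝ) ≤ |(2 : ℝ) ^ 16 * weightedAutocorr (rmEval u0 u) 16| := by
      rw [two_pow_mul_weightedAutocorr, ← Int.cast_abs]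
      exact_mod_cast abs_autocorr_rmEval_four_ge u0 u
    rw [abs_mul] at hcomp
    norm_num at hcomp ⊢
    linarith
  | succ m hm ih =>
    have hdouble := abs_weightedAutocorr_double_ge (f := rmEval u0 u) (g := rmEval u0 (Fin.init u))
      (c := u (Fin.last m))
      (fun t ht => rmEval_of_lt u0 u ht) (fun t ht => rmEval_add_two_pow u0 u ht)
    rw [← two_mul, ← pow_succ'] at hdouble
    push_cast at hdouble
    have hprev := ih (Fin.init u)
    have hε : (1 / 2 : ℝ) ^ 2 ^ m ≤ 1 / 18 :=
      calc (1 / 2 : ℝ) ^ 2 ^ m ≤ (1 / 2) ^ 2 ^ 4 :=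
            pow_le_pow_of_le_one (by norm_num) (by norm_num) (Nat.pow_le_pow_right two_pos hm)
        _ ≤ 1 / 18 := by norm_num
    have hsq : (1 / 2 : ℝ) ^ 2 ^ (m + 1) = ((1 / 2) ^ 2 ^ m) ^ 2 := by rw [pow_succ, pow_mul]
    have hscale : (0 : ℝ) ≤ 2 ^ m * (1 / 2) ^ 2 ^ m := by positivity
    rw [hsq, pow_succ (2 : ℝ) m]
    nlinarith [mul_nonneg hscale (sub_nonneg.2 hε)]

/-- Condition (C4): for any `RM(m,1)` codeword,
`|β_x - γ_x| ≥ 0.06 - 3·Σ_{k=16}^{n/2} k (1/2)^k`. -/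
theorem RM1_beta_gamma_gap (m : ℕ) (hm : 4 ≤ m) (x : Fin (2 ^ m) → Bool)
    (hx : x ∈ RM1 m) :
    0.06 - 3 * ∑ k ∈ Finset.Icc (16 : ℕ) (2 ^ m / 2), (k : ℝ) * ((1:ℝ)/2) ^ k ≤
      |betaC x - gammaC x| := by
  obtain ⟨u0, u, hu⟩ := hx
  rw [betaC_sub_gammaC_eq_weightedAutocorr x (rmEval u0 u) hu]
  have hbound := abs_weightedAutocorr_rmEval_ge m hm u0 u
  have htail : 0 ≤ ∑ k ∈ Icc (16 : ℕ) (2 ^ m / 2), (k : ℝ) * (1 / 2) ^ k :=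
    sum_nonneg fun k _ => by positivity
  have herr : (0 : ℝ) ≤ 9 / 2 * 2 ^ m * (1 / 2) ^ 2 ^ m := by positivity
  linarith
end

section
/- Let x be a binary sequence of length n ≥ 1 and let x̂ = x‖x be the concatenation of x with itself (of length 2n). Then α_{x̂} = 2α_x + β_x + (1/2)^n·α_x + n·(1/2)^n, where the coefficients of x̂ are computed with respect to its length 2n. -/
open Finset

/-! The pairs `i < j` of equal letters of `x‖x` are the pairs inside the first copy, the pairs
inside the second copy, and the cross pairs `(i, n + j)` with `x i = x j`, whose distance is
`n + j - i`. Sorting the cross pairs by `i < j`, `i = j`, `i > j` gives `(1/2)^n α_x`,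
`n (1/2)^n` and `β_x` respectively. -/

section pairSum

variable {α : Type*} [DecidableEq α]

noncomputable def pairSum {m : ℕ} (x : Fin m → α) (f : ℕ → ℝ) : ℝ :=
  ∑ i, ∑ j, if x i = x j ∧ i < j then f (j - i) else 0

lemma pairSum_const_mul {m : ℕ} (x : Fin m → α) (c : ℝ) (f : ℕ → ℝ) :
    pairSum x (fun d => c * f d) = c * pairSum x f := by
  simp only [pairSum, Finset.mul_sum, mul_ite, mul_zero]

lemma pairSum_append {m n : ℕ} (x : Fin m → α) (y : Fin n → α) (f : ℕ → ℝ) :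
    pairSum (Fin.append x y) f =
      pairSum x f + pairSum y f + ∑ i, ∑ j, if x i = y j then f (m + j - i) else 0 := by
  have hlt : ∀ (i : Fin m) (j : Fin n), Fin.castAdd n i < Fin.natAdd m j := fun i j =>
    Fin.lt_def.2 (by simp only [Fin.val_castAdd, Fin.val_natAdd]; omega)
  have hnlt : ∀ (i : Fin n) (j : Fin m), ¬ Fin.natAdd m i < Fin.castAdd n j := fun i j =>
    by simp only [Fin.lt_def, Fin.val_castAdd, Fin.val_natAdd]; omega
  have hcast : ∀ i j : Fin m, Fin.castAdd n i < Fin.castAdd n j ↔ i < j := fun _ _ =>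
    (Fin.strictMono_castAdd n).lt_iff_lt
  simp only [pairSum, Fin.sum_univ_add, Fin.append_left, Fin.append_right, hcast,
    Fin.natAdd_lt_natAdd_iff, Fin.val_castAdd, Fin.val_natAdd, hlt, hnlt, and_true, and_false,
    if_false, Finset.sum_const_zero, Nat.add_sub_add_left, add_zero, Finset.sum_add_distrib]
  ring

lemma sum_sum_ite_eq_pairSum_add_pairSum {n : ℕ} (x : Fin n → α) (f : ℕ → ℝ) :
    (∑ i, ∑ j, if x i = x j then f (n + j - i) else 0) =
      pairSum x (fun d => f (n + d)) + pairSum x (fun d => f (n - d)) + n * f n := by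
  have trichotomy : ∀ i j : Fin n, (if x i = x j then f (n + j - i) else 0) =
      (if x i = x j ∧ i < j then f (n + (j - i)) else 0) +
      (if x j = x i ∧ j < i then f (n - (i - j)) else 0) + (if i = j then f n else 0) := by
    intro i j
    rcases lt_trichotomy i j with h | rfl | h
    · have : (n + j - i : ℕ) = n + (j - i) := by have := Fin.lt_def.1 h; omega
      simp [h, h.ne, asymm h, this, eq_comm]
    · simp
    · have : (n + j - i : ℕ) = n - (i - j) := by have := Fin.lt_def.1 h; omega
      simp [h, h.ne', asymm h, this, eq_comm]
  simp only [trichotomy, Finset.sum_add_distrib, Finset.sum_ite_eq, Finset.mem_univ, if_true,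
    Finset.sum_const, Finset.card_univ, Fintype.card_fin, nsmul_eq_mul, pairSum]
  rw [Finset.sum_comm (f := fun i j => if x j = x i ∧ j < i then f (n - (i - j)) else 0)]

end pairSum

lemma sum_filter_false_add_sum_filter_true {m : ℕ} (x : Fin m → Bool) (f : ℕ → ℝ) :
    (∑ i ∈ univ.filter (fun i => x i = false),
        ∑ j ∈ univ.filter (fun j => x j = false ∧ i < j), f (j - i)) +
      ∑ i ∈ univ.filter (fun i => x i = true),
        ∑ j ∈ univ.filter (fun j => x j = true ∧ i < j), f (j - i) = pairSum x f := by
  rw [Finset.sum_filter, Finset.sum_filter, ← Finset.sum_add_distrib]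
  refine Finset.sum_congr rfl fun i _ => ?_
  rw [Finset.sum_filter, Finset.sum_filter]
  cases x i <;> simp

lemma alphaC_eq_pairSum {m : ℕ} (x : Fin m → Bool) :
    alphaC x = pairSum x fun d => (1 / 2 : ℝ) ^ d :=
  sum_filter_false_add_sum_filter_true x _

lemma betaC_eq_pairSum {m : ℕ} (x : Fin m → Bool) :
    betaC x = pairSum x fun d => (1 / 2 : ℝ) ^ (m - d) :=
  sum_filter_false_add_sum_filter_true x fun d => (1 / 2 : ℝ) ^ (m - d)

theorem alpha_append_self_general (n : ℕ) (x : Fin n → Bool) :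
    alphaC (Fin.append x x) =
      2 * alphaC x + betaC x + ((1:ℝ)/2) ^ n * alphaC x + (n : ℝ) * ((1:ℝ)/2) ^ n := by
  have hcross := sum_sum_ite_eq_pairSum_add_pairSum x fun d => (1 / 2 : ℝ) ^ d
  simp only [pow_add, pairSum_const_mul] at hcross
  rw [alphaC_eq_pairSum, pairSum_append, hcross, alphaC_eq_pairSum, betaC_eq_pairSum]
  ring

/-- Lemma 3(a): `α_{x‖x} = 2α_x + β_x + (1/2)^n·α_x + n·(1/2)^n`. -/
theorem alpha_append_self (n : ℕ) (hn : 1 ≤ n) (x : Fin n → Bool) :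
    alphaC (Fin.append x x) =
      2 * alphaC x + betaC x + ((1:ℝ)/2) ^ n * alphaC x + (n : ℝ) * ((1:ℝ)/2) ^ n :=
  alpha_append_self_general n x
end
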